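/- arXiv:1812.06027 — 10 statements merged into one kernel-verified Lean document; each statement's English description precedes it below -/
import Mathlib

section
/- Let E be a finite-dimensional real normed vector space, v : E → E a C^∞ vector field, and x : (a₋, a₊) → E a maximal integral curve of v (i.e. x is differentiable with x'(t) = v(x(t)) for all t ∈ (a₋, a₊), and x admits no extension to an integral curve of v on a strictly larger open interval), where −∞ ≤ a₋ < a₊ ≤ ∞. If there exist t' ∈ (a₋, a₊) and a compact set C ⊆ E such that x(t) ∈ C for all t ∈ [t', a₊), then a₊ = ∞. Symmetrically, if x(t) ∈ C for all t ∈ (a₋, t'], then a₋ = −∞. -/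
open Set Filter Topology Function

lemma extend_aux {E : Type*} [NormedAddCommGroup E] [NormedSpace ℝ E] [CompleteSpace E]
    (v : E → E) (hv : ContDiff ℝ 1 v)
    (a : EReal) (B : ℝ) (x : ℝ → E)
    (hx : ∀ t : ℝ, a < (t : EReal) → t < B → HasDerivAt x (v (x t)) t)
    (t' : ℝ) (ht'₁ : a < (t' : EReal)) (ht'₂ : t' < B)
    (C : Set E) (hC : IsCompact C)
    (hmem : ∀ t : ℝ, t' ≤ t → t < B → x t ∈ C) :
    ∃ (ε : ℝ) (y : ℝ → E), 0 < ε ∧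
      (∀ t : ℝ, a < (t : EReal) → t < B + ε → HasDerivAt y (v (y t)) t) ∧
      (∀ t : ℝ, a < (t : EReal) → t < B → y t = x t) := by
  have ha_lt : ∀ t : ℝ, t' ≤ t → a < (t : EReal) := fun t ht =>
    lt_of_lt_of_le ht'₁ (EReal.coe_le_coe_iff.2 ht)
  -- bound on `v` over `C`
  obtain ⟨M, hM⟩ := hC.exists_bound_of_continuousOn hv.continuous.continuousOn
  -- `x` is Lipschitz on `Ico t' B`
  set K : NNReal := ⟨max M 0, le_max_right _ _⟩ with hK
  have hxS : ∀ u ∈ Ico t' B, HasDerivWithinAt x (v (x u)) (Ico t' B) u := fun u hu =>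
    (hx u (ha_lt u hu.1) hu.2).hasDerivWithinAt
  have hlip : LipschitzOnWith K x (Ico t' B) := by
    apply (convex_Ico t' B).lipschitzOnWith_of_nnnorm_hasDerivWithin_le hxS
    intro u hu
    rw [← NNReal.coe_le_coe]
    exact le_trans (hM _ (hmem u hu.1 hu.2)) (le_max_left _ _)
  -- the limit `p` of `x` at `B⁻` exists
  have hne : (𝓝[Ico t' B] B).NeBot := by
    apply mem_closure_iff_nhdsWithin_neBot.1
    rw [closure_Ico (ne_of_lt ht'₂)]
    exact ⟨le_of_lt ht'₂, le_rfl⟩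
  have hle1 : 𝓝[Ico t' B] B ≤ 𝓟 (Ico t' B) := inf_le_right
  have hcauchy : Cauchy (map x (𝓝[Ico t' B] B)) := by
    refine ⟨hne.map x, ?_⟩
    rw [prod_map_map_eq']
    refine le_trans (map_mono ?_) hlip.uniformContinuousOn
    refine le_inf ?_ ?_
    · refine le_trans (prod_mono nhdsWithin_le_nhds nhdsWithin_le_nhds) ?_
      rw [← nhds_prod_eq]
      exact nhds_le_uniformity B
    · rw [← prod_principal_principal]
      exact prod_mono hle1 hle1
  obtain ⟨p, hp⟩ := cauchy_map_iff_exists_tendsto.1 hcauchy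
  have hp' : Tendsto x (𝓝[<] B) (𝓝 p) := by
    refine hp.mono_left (nhdsWithin_le_of_mem ?_)
    exact mem_of_superset (Ioo_mem_nhdsLT_of_mem ⟨ht'₂, le_rfl⟩) Ioo_subset_Ico_self
  -- local solution `g` through `p` at time `B`
  obtain ⟨g, hgB, ε₀, hε₀, hgd⟩ := (hv.contDiffAt (x := p)).exists_forall_mem_closedBall_exists_eq_forall_mem_Ioo_hasDerivAt₀ B
  -- a Lipschitz neighborhood `s` of `p`
  obtain ⟨K', s, hs, hlipv⟩ := (hv.contDiffAt (x := p)).exists_lipschitzOnWith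
  have hps : p ∈ s := mem_of_mem_nhds hs
  -- choose `c₁ < B` close enough
  have hgcont : ContinuousAt g B := (hgd B ⟨by linarith, by linarith⟩).continuousAt
  have hev1 : ∀ᶠ t in 𝓝[<] B, x t ∈ s := hp'.eventually hs
  have hev2 : ∀ᶠ t in 𝓝[<] B, g t ∈ s := by
    apply eventually_nhdsWithin_of_eventually_nhds
    apply hgcont.eventually_mem
    rwa [hgB]
  obtain ⟨c, hcB, hc⟩ := mem_nhdsLT_iff_exists_Ioo_subset.1 (hev1.and hev2)
  set c₁ : ℝ := max c (max t' (B - ε₀)) with hc₁def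
  have hc₁B : c₁ < B := by
    apply max_lt hcB
    apply max_lt ht'₂
    linarith
  set c₂ : ℝ := (c₁ + B) / 2 with hc₂def
  have hc₁c₂ : c₁ < c₂ := by simp only [hc₂def]; linarith
  have hc₂B : c₂ < B := by simp only [hc₂def]; linarith
  have hIoo : ∀ t, c₁ < t → t < B → (x t ∈ s ∧ g t ∈ s) :=
    fun t h1 h2 => hc ⟨lt_of_le_of_lt (le_max_left _ _) h1, h2⟩
  have ht'c₁ : t' ≤ c₁ := (le_max_left _ _).trans (le_max_right c _)
  have hεc₁ : B - ε₀ ≤ c₁ := (le_max_right _ _).trans (le_max_right c _)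
  -- the extension `x̄` of `x` with value `p` at `B`
  set xb : ℝ → E := Function.update x B p with hxb
  have hxb_eq : ∀ t : ℝ, t ≠ B → xb t = x t := fun t ht => Function.update_of_ne ht _ _
  have hxbB : xb B = p := Function.update_self _ _ _
  have hxb_ev : ∀ t : ℝ, t < B → xb =ᶠ[𝓝 t] x := by
    intro t ht
    filter_upwards [Iio_mem_nhds ht] with u hu
    exact hxb_eq u (ne_of_lt hu)
  have hxb_deriv : ∀ t : ℝ, t' ≤ t → t < B → HasDerivAt xb (v (xb t)) t := by
    intro t h1 h2
    rw [hxb_eq t (ne_of_lt h2)]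
    exact (hx t (ha_lt t h1) h2).congr_of_eventuallyEq (hxb_ev t h2)
  have hxb_tendsto : Tendsto xb (𝓝[<] B) (𝓝 p) := by
    refine hp'.congr' ?_
    filter_upwards [self_mem_nhdsWithin] with u hu
    exact (hxb_eq u (ne_of_lt hu)).symm
  -- `x̄` and `g` agree on `Icc c₂ B`
  have heq : EqOn xb g (Icc c₂ B) := by
    apply ODE_solution_unique_of_mem_Icc_left (v := fun _ => v) (s := fun _ => s) (K := K')
      (fun _ _ => hlipv)
    · -- ContinuousOn xb (Icc c₂ B)
      intro t ht
      rcases lt_or_eq_of_le ht.2 with h | h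
      · exact ((hxb_deriv t (ht'c₁.trans (hc₁c₂.le.trans ht.1)) h).continuousAt).continuousWithinAt
      · rw [h, ContinuousWithinAt, hxbB,
          show Icc c₂ B = insert B (Ico c₂ B) from (Ico_insert_right hc₂B.le).symm,
          nhdsWithin_insert]
        refine tendsto_sup.2 ⟨?_, ?_⟩
        · simpa [hxbB] using tendsto_pure_nhds xb B
        · exact hxb_tendsto.mono_left (nhdsWithin_mono _ (fun u hu => hu.2))
    · -- derivative of xb on Ioc c₂ B within Iic
      intro t ht
      rcases lt_or_eq_of_le ht.2 with h | h
      · exact (hxb_deriv t (ht'c₁.trans (hc₁c₂.trans ht.1).le) h).hasDerivWithinAt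
      · rw [h, hxbB]
        apply hasDerivWithinAt_Iic_of_tendsto_deriv (s := Ioo c₁ B)
        · intro u hu
          exact (hxb_deriv u (ht'c₁.trans hu.1.le) hu.2).differentiableAt.differentiableWithinAt
        · rw [ContinuousWithinAt, hxbB]
          exact hxb_tendsto.mono_left (nhdsWithin_mono _ (fun u hu => hu.2))
        · exact Ioo_mem_nhdsLT_of_mem ⟨hc₁B, le_rfl⟩
        · have : Tendsto (fun u => v (x u)) (𝓝[<] B) (𝓝 (v p)) :=
            (hv.continuous.tendsto p).comp hp'
          refine this.congr' ?_
          filter_upwards [Ioo_mem_nhdsLT_of_mem ⟨hc₁B, le_rfl⟩] with u hu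
          rw [(hxb_deriv u (ht'c₁.trans hu.1.le) hu.2).deriv, hxb_eq u (ne_of_lt hu.2)]
    · -- xb values in s
      intro t ht
      rcases lt_or_eq_of_le ht.2 with h | h
      · rw [hxb_eq t (ne_of_lt h)]
        exact (hIoo t (hc₁c₂.trans ht.1) h).1
      · rw [h, hxbB]; exact hps
    · -- ContinuousOn g
      intro t ht
      exact ((hgd t ⟨by linarith [ht.1], by linarith [ht.2]⟩).continuousAt).continuousWithinAt
    · intro t ht
      exact (hgd t ⟨by linarith [ht.1], by linarith [ht.2]⟩).hasDerivWithinAt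
    · intro t ht
      rcases lt_or_eq_of_le ht.2 with h | h
      · exact (hIoo t (hc₁c₂.trans ht.1) h).2
      · rw [h, hgB]; exact hps
    · rw [hxbB, hgB]
  -- define the glued curve
  refine ⟨ε₀, fun t => if t < B then x t else g t, hε₀, ?_, ?_⟩
  · intro t h1 h2
    rcases lt_or_ge t B with h | h
    · have hyx : ∀ᶠ u in 𝓝 t, (if u < B then x u else g u) = x u := by
        filter_upwards [Iio_mem_nhds h] with u hu
        exact if_pos hu
      have := (hx t h1 h).congr_of_eventuallyEq hyx
      simpa [if_pos h] using this
    · have hc₂t : c₂ < t := lt_of_lt_of_le hc₂B h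
      have hyg : ∀ᶠ u in 𝓝 t, (if u < B then x u else g u) = g u := by
        filter_upwards [Ioi_mem_nhds hc₂t] with u hu
        rcases lt_or_ge u B with h' | h'
        · rw [if_pos h']
          have := heq ⟨hu.le, h'.le⟩
          rw [← this, hxb_eq u (ne_of_lt h')]
        · rw [if_neg (not_lt.2 h')]
      have hgt : HasDerivAt g (v (g t)) t := hgd t ⟨by linarith, h2⟩
      have := hgt.congr_of_eventuallyEq hyg
      simpa [if_neg (not_lt.2 h), hyg.self_of_nhds] using this
  · intro t _ h2
    exact if_pos h2

/-- If a maximal integral curve of a smooth vector field on a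
finite-dimensional real normed space stays in a compact set near one end of its
domain `(a, b)`, then that end is infinite. -/
theorem stmt_0 {E : Type*} [NormedAddCommGroup E] [NormedSpace ℝ E]
    [FiniteDimensional ℝ E]
    (v : E → E) (hv : ContDiff ℝ (⊤ : ℕ∞) v)
    (a b : EReal) (hlt : a < b) (x : ℝ → E)
    (hx : ∀ t : ℝ, a < (t : EReal) → (t : EReal) < b → HasDerivAt x (v (x t)) t)
    (hmax : ∀ (a' b' : EReal) (y : ℝ → E), a' ≤ a → b ≤ b' →
      (∀ t : ℝ, a' < (t : EReal) → (t : EReal) < b' → HasDerivAt y (v (y t)) t) →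
      (∀ t : ℝ, a < (t : EReal) → (t : EReal) < b → y t = x t) →
      a' = a ∧ b' = b)
    (t' : ℝ) (ht'₁ : a < (t' : EReal)) (ht'₂ : (t' : EReal) < b)
    (C : Set E) (hC : IsCompact C) :
    ((∀ t : ℝ, t' ≤ t → (t : EReal) < b → x t ∈ C) → b = ⊤) ∧
    ((∀ t : ℝ, a < (t : EReal) → t ≤ t' → x t ∈ C) → a = ⊥) := by
  have hv1 : ContDiff ℝ 1 v := hv.of_le (by simp)
  constructor
  · intro hmemr
    by_contra hbtop
    have hbbot : b ≠ ⊥ := ne_bot_of_gt ht'₂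
    lift b to ℝ using ⟨hbtop, hbbot⟩ with B hB
    obtain ⟨ε, y, hε, hy, hyx⟩ := extend_aux v hv1 a B x
      (fun t h1 h2 => hx t h1 (EReal.coe_lt_coe_iff.2 h2))
      t' ht'₁ (EReal.coe_lt_coe_iff.1 ht'₂) C hC
      (fun t h1 h2 => hmemr t h1 (EReal.coe_lt_coe_iff.2 h2))
    have hkey := (hmax a (↑(B + ε)) y le_rfl
      (EReal.coe_le_coe_iff.2 (by linarith))
      (fun t h1 h2 => hy t h1 (EReal.coe_lt_coe_iff.1 h2))
      (fun t h1 h2 => hyx t h1 (EReal.coe_lt_coe_iff.1 h2))).2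
    have : B + ε = B := EReal.coe_eq_coe_iff.1 hkey
    linarith
  · intro hmeml
    by_contra habot
    have hatop : a ≠ ⊤ := ne_top_of_lt ht'₁
    lift a to ℝ using ⟨hatop, habot⟩ with A hA
    have hAt' : A < t' := EReal.coe_lt_coe_iff.1 ht'₁
    obtain ⟨ε, z, hε, hz, hzx⟩ := extend_aux (fun w => -v w) hv1.neg
      (-b) (-A) (fun t => x (-t))
      (by
        intro t h1 h2
        have hb1 : ((-t : ℝ) : EReal) < b := by
          rw [EReal.coe_neg]
          exact EReal.neg_lt_comm.1 h1
        have ha1 : ((A : ℝ) : EReal) < ((-t : ℝ) : EReal) :=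
          EReal.coe_lt_coe_iff.2 (by linarith)
        have h := hx (-t) ha1 hb1
        have h2' := h.scomp t (hasDerivAt_neg t)
        simpa [Function.comp_def] using h2')
      (-t')
      (by
        rw [EReal.coe_neg]
        exact EReal.neg_lt_neg_iff.2 ht'₂)
      (by linarith)
      C hC
      (by
        intro t h1 h2
        exact hmeml (-t) (EReal.coe_lt_coe_iff.2 (by linarith)) (by linarith))
    have hkey := (hmax (↑(A - ε)) b (fun t => z (-t))
      (EReal.coe_le_coe_iff.2 (by linarith)) le_rfl
      (by
        intro t h1 h2
        have hb1 : (-b) < ((-t : ℝ) : EReal) := by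
          rw [EReal.coe_neg]
          exact EReal.neg_lt_neg_iff.2 h2
        have h := hz (-t) hb1 (by linarith [EReal.coe_lt_coe_iff.1 h1])
        have h2' := h.scomp t (hasDerivAt_neg t)
        simpa [Function.comp_def] using h2')
      (by
        intro t h1 h2
        have hb1 : (-b) < ((-t : ℝ) : EReal) := by
          rw [EReal.coe_neg]
          exact EReal.neg_lt_neg_iff.2 h2
        have := hzx (-t) hb1 (by linarith [EReal.coe_lt_coe_iff.1 h1])
        simpa using this)).1
    have : A - ε = A := EReal.coe_eq_coe_iff.1 hkey
    linarith
end

section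
/- Let E be a finite-dimensional real normed vector space and v : E → E a C^∞ vector field. Every maximal integral curve of v whose image lies in a compact subset of E is complete, that is, its domain of definition is all of ℝ. -/
open Set Metric Filter Topology

/-- Picard–Lindelöf data valid uniformly for all initial points near `p`. -/
lemma my_near_point {E : Type*} [NormedAddCommGroup E] [NormedSpace ℝ E] [CompleteSpace E]
    (v : E → E) (hv : ContDiff ℝ (⊤ : ℕ∞) v) (p : E) :
    ∃ ε > (0:ℝ), ∃ r > (0:ℝ), ∀ q ∈ ball p r, ∀ t₀ : ℝ,
      ∃ f : ℝ → E, f t₀ = q ∧ ∀ t ∈ Icc (t₀ - ε) (t₀ + ε),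
        HasDerivWithinAt f (v (f t)) (Icc (t₀ - ε) (t₀ + ε)) t := by
  obtain ⟨ε, hε, a, r, L, K, hr, hpl⟩ :=
    IsPicardLindelof.of_contDiffAt_one ((hv.of_le (by simp)).contDiffAt (x := p))
  refine ⟨ε, hε, r, NNReal.coe_pos.mpr hr, fun q hq t₀ => ?_⟩
  exact (hpl t₀).exists_eq_forall_mem_Icc_hasDerivWithinAt (ball_subset_closedBall hq)

/-- Uniform local existence of solutions with initial point in a compact set. -/
lemma my_uniform {E : Type*} [NormedAddCommGroup E] [NormedSpace ℝ E] [CompleteSpace E]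
    (v : E → E) (hv : ContDiff ℝ (⊤ : ℕ∞) v) (C : Set E) (hC : IsCompact C) :
    ∃ ε > (0:ℝ), ∀ q ∈ C, ∀ t₀ : ℝ, ∃ f : ℝ → E, f t₀ = q ∧
      ∀ t ∈ Ioo (t₀ - ε) (t₀ + ε), HasDerivAt f (v (f t)) t := by
  choose εf hεf rf hrf hpl using my_near_point v hv
  obtain ⟨T, hTC, hTcov⟩ := hC.elim_nhds_subcover (fun p => ball p (rf p))
    (fun p _ => ball_mem_nhds p (hrf p))
  rcases T.eq_empty_or_nonempty with hT | hT
  · refine ⟨1, one_pos, fun q hq => absurd (hTcov hq) ?_⟩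
    simp [hT]
  refine ⟨T.inf' hT εf, ?_, fun q hq t₀ => ?_⟩
  · exact (Finset.lt_inf'_iff hT).mpr fun p _ => hεf p
  obtain ⟨p, hpT, hqp⟩ : ∃ p ∈ T, q ∈ ball p (rf p) := by
    simpa using hTcov hq
  obtain ⟨f, hf0, hf⟩ := hpl p q hqp t₀
  refine ⟨f, hf0, fun t ht => ?_⟩
  have hle : T.inf' hT εf ≤ εf p := Finset.inf'_le _ hpT
  have ht' : t ∈ Ioo (t₀ - εf p) (t₀ + εf p) :=
    ⟨by have := ht.1; linarith, by have := ht.2; linarith⟩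
  exact (hf t (Ioo_subset_Icc_self ht')).hasDerivAt (Icc_mem_nhds ht'.1 ht'.2)

/-- A smooth vector field is Lipschitz on a set containing any given compact set. -/
lemma my_lip {E : Type*} [NormedAddCommGroup E] [NormedSpace ℝ E] [FiniteDimensional ℝ E]
    (v : E → E) (hv : ContDiff ℝ (⊤ : ℕ∞) v) (K : Set E) (hK : IsCompact K) :
    ∃ (L : NNReal) (S : Set E), K ⊆ S ∧ LipschitzOnWith L v S := by
  obtain ⟨r, hr⟩ := hK.isBounded.subset_closedBall 0
  set S := closedBall (0:E) (|r| + 1) with hS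
  have hKS : K ⊆ S := hr.trans (closedBall_subset_closedBall (by
    have := le_abs_self r; linarith))
  have hScomp : IsCompact S := isCompact_closedBall _ _
  have hcont : Continuous (fderiv ℝ v) := hv.continuous_fderiv (by simp)
  obtain ⟨M, hM⟩ := hScomp.exists_bound_of_continuousOn hcont.continuousOn
  refine ⟨(max M 0).toNNReal, S, hKS, ?_⟩
  refine (convex_closedBall _ _).lipschitzOnWith_of_nnnorm_fderiv_le
    (fun z _ => (hv.differentiable (by simp)).differentiableAt) (fun z hz => ?_)
  rw [← NNReal.coe_le_coe, coe_nnnorm, Real.coe_toNNReal _ (le_max_right M 0)]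
  exact (hM z hz).trans (le_max_left _ _)

lemma my_ext_right {E : Type*} [NormedAddCommGroup E] [NormedSpace ℝ E] [FiniteDimensional ℝ E]
    (v : E → E) (hv : ContDiff ℝ (⊤ : ℕ∞) v)
    (a : EReal) (β : ℝ) (hlt : a < (β : EReal)) (x : ℝ → E)
    (hx : ∀ t : ℝ, a < (t : EReal) → (t : EReal) < (β : EReal) → HasDerivAt x (v (x t)) t)
    (C : Set E) (hC : IsCompact C)
    (hxC : ∀ t : ℝ, a < (t : EReal) → (t : EReal) < (β : EReal) → x t ∈ C) :
    ∃ β' : ℝ, β < β' ∧ ∃ y : ℝ → E,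
      (∀ t : ℝ, a < (t : EReal) → (t : EReal) < (β' : EReal) → HasDerivAt y (v (y t)) t) ∧
      (∀ t : ℝ, a < (t : EReal) → (t : EReal) < (β : EReal) → y t = x t) := by
  obtain ⟨ε, hε, huni⟩ := my_uniform v hv C hC
  -- choose t1 ∈ (max a (β - ε/2), β)
  have h1 : max a ((β - ε/2 : ℝ) : EReal) < (β : EReal) :=
    max_lt hlt (EReal.coe_lt_coe_iff.mpr (by linarith))
  obtain ⟨c, hc1, hc2⟩ := exists_between h1
  obtain ⟨t1, rfl⟩ : ∃ t1 : ℝ, (t1 : EReal) = c :=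
    ⟨c.toReal, EReal.coe_toReal (ne_top_of_lt hc2)
      (ne_bot_of_gt (lt_of_le_of_lt (le_max_right _ _) hc1))⟩
  have hat1 : a < (t1 : EReal) := lt_of_le_of_lt (le_max_left _ _) hc1
  have ht1β : t1 < β := EReal.coe_lt_coe_iff.mp hc2
  have ht1ε : β - ε/2 < t1 :=
    EReal.coe_lt_coe_iff.mp (lt_of_le_of_lt (le_max_right _ _) hc1)
  obtain ⟨g, hg0, hg⟩ := huni (x t1) (hxC t1 hat1 (EReal.coe_lt_coe_iff.mpr ht1β)) t1
  -- choose tℓ ∈ (max a (t1 - ε), t1)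
  have h2 : max a ((t1 - ε : ℝ) : EReal) < (t1 : EReal) :=
    max_lt hat1 (EReal.coe_lt_coe_iff.mpr (by linarith))
  obtain ⟨c', hc1', hc2'⟩ := exists_between h2
  obtain ⟨tℓ, rfl⟩ : ∃ tℓ : ℝ, (tℓ : EReal) = c' :=
    ⟨c'.toReal, EReal.coe_toReal (ne_top_of_lt hc2')
      (ne_bot_of_gt (lt_of_le_of_lt (le_max_right _ _) hc1'))⟩
  have hatℓ : a < (tℓ : EReal) := lt_of_le_of_lt (le_max_left _ _) hc1'
  have htℓ1 : tℓ < t1 := EReal.coe_lt_coe_iff.mp hc2'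
  have htℓε : t1 - ε < tℓ :=
    EReal.coe_lt_coe_iff.mp (lt_of_le_of_lt (le_max_right _ _) hc1')
  -- g is continuous on Icc tℓ β
  have hsubg : Icc tℓ β ⊆ Ioo (t1 - ε) (t1 + ε) := fun s hs =>
    ⟨lt_of_lt_of_le htℓε hs.1, lt_of_le_of_lt hs.2 (by linarith)⟩
  have hgcont : ContinuousOn g (Icc tℓ β) := fun s hs =>
    (hg s (hsubg hs)).continuousAt.continuousWithinAt
  have hKg : IsCompact (C ∪ g '' Icc tℓ β) :=
    hC.union (isCompact_Icc.image_of_continuousOn hgcont)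
  obtain ⟨L, S, hKS, hlip⟩ := my_lip v hv _ hKg
  -- uniqueness of solutions on the overlap
  have heq : Set.EqOn x g (Ioo tℓ β) := by
    refine ODE_solution_unique_of_mem_Ioo (v := fun _ => v) (s := fun _ => S)
      (fun _ _ => hlip) (t₀ := t1) ⟨htℓ1, ht1β⟩ (fun t ht => ?_) (fun t ht => ?_) hg0.symm
    · exact ⟨hx t (lt_trans hatℓ (EReal.coe_lt_coe_iff.mpr ht.1))
        (EReal.coe_lt_coe_iff.mpr ht.2),
        hKS (Or.inl (hxC t (lt_trans hatℓ (EReal.coe_lt_coe_iff.mpr ht.1))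
          (EReal.coe_lt_coe_iff.mpr ht.2)))⟩
    · exact ⟨hg t (hsubg (Ioo_subset_Icc_self ht)),
        hKS (Or.inr ⟨t, Ioo_subset_Icc_self ht, rfl⟩)⟩
  refine ⟨t1 + ε/2, by linarith, fun t => if t < β then x t else g t, ?_,
    fun t hat htβ => if_pos (EReal.coe_lt_coe_iff.mp htβ)⟩
  intro t hat htβ'c
  have htβ' : t < t1 + ε/2 := EReal.coe_lt_coe_iff.mp htβ'c
  by_cases h : t < β
  · have hy : (fun s => if s < β then x s else g s) =ᶠ[𝓝 t] x := by
      filter_upwards [Iio_mem_nhds h] with s hs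
      exact if_pos hs
    have hd := (hx t hat (EReal.coe_lt_coe_iff.mpr h)).congr_of_eventuallyEq hy
    simpa only [if_pos h] using hd
  · push_neg at h
    have hmem : t ∈ Ioo tℓ (t1 + ε/2) := ⟨lt_of_lt_of_le (htℓ1.trans ht1β) h, htβ'⟩
    have hyg : ∀ s ∈ Ioo tℓ (t1 + ε/2), (if s < β then x s else g s) = g s := by
      intro s hs
      by_cases h2 : s < β
      · rw [if_pos h2]; exact heq ⟨hs.1, h2⟩
      · rw [if_neg h2]
    have hy : (fun s => if s < β then x s else g s) =ᶠ[𝓝 t] g := by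
      filter_upwards [Ioo_mem_nhds hmem.1 hmem.2] with s hs
      exact hyg s hs
    have hgd : HasDerivAt g (v (g t)) t :=
      hg t ⟨by linarith [hmem.1], by linarith⟩
    have hd := hgd.congr_of_eventuallyEq hy
    simpa only [hyg t hmem] using hd

/-- A maximal integral curve of a smooth vector field on a
finite-dimensional real normed space whose image lies in a compact set is
complete, i.e. defined on all of `ℝ`. -/
theorem stmt_1 {E : Type*} [NormedAddCommGroup E] [NormedSpace ℝ E]
    [FiniteDimensional ℝ E]
    (v : E → E) (hv : ContDiff ℝ (⊤ : ℕ∞) v)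
    (a b : EReal) (hlt : a < b) (x : ℝ → E)
    (hx : ∀ t : ℝ, a < (t : EReal) → (t : EReal) < b → HasDerivAt x (v (x t)) t)
    (hmax : ∀ (a' b' : EReal) (y : ℝ → E), a' ≤ a → b ≤ b' →
      (∀ t : ℝ, a' < (t : EReal) → (t : EReal) < b' → HasDerivAt y (v (y t)) t) →
      (∀ t : ℝ, a < (t : EReal) → (t : EReal) < b → y t = x t) →
      a' = a ∧ b' = b)
    (C : Set E) (hC : IsCompact C)
    (hxC : ∀ t : ℝ, a < (t : EReal) → (t : EReal) < b → x t ∈ C) :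
    a = ⊥ ∧ b = ⊤ := by
  constructor
  · -- a = ⊥
    by_contra ha
    have haT : a ≠ ⊤ := ne_top_of_lt hlt
    set aR := a.toReal with haR
    have hcoea : (aR : EReal) = a := EReal.coe_toReal haT ha
    -- reversed flow
    set w : E → E := fun u => -v u with hw
    have hwc : ContDiff ℝ (⊤ : ℕ∞) w := hv.neg
    set z : ℝ → E := fun t => x (-t) with hz
    have hlt' : -b < ((-aR : ℝ) : EReal) := by
      rw [EReal.coe_neg, hcoea]
      exact EReal.neg_lt_neg_iff.mpr hlt
    have hzsol : ∀ t : ℝ, -b < (t : EReal) → (t : EReal) < ((-aR : ℝ) : EReal) →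
        HasDerivAt z (w (z t)) t := by
      intro t h1 h2
      rw [EReal.coe_neg, hcoea] at h2
      have hmem1 : a < ((-t : ℝ) : EReal) := by
        rw [EReal.coe_neg]; exact EReal.lt_neg_comm.mp h2
      have hmem2 : ((-t : ℝ) : EReal) < b := by
        rw [EReal.coe_neg]; exact EReal.neg_lt_comm.mpr h1
      have hdx := hx (-t) hmem1 hmem2
      have := hdx.scomp (x := t) (hasDerivAt_neg t)
      simpa [hz, hw, Function.comp_def] using this
    have hzC : ∀ t : ℝ, -b < (t : EReal) → (t : EReal) < ((-aR : ℝ) : EReal) → z t ∈ C := by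
      intro t h1 h2
      rw [EReal.coe_neg, hcoea] at h2
      exact hxC (-t) (by rw [EReal.coe_neg]; exact EReal.lt_neg_comm.mp h2)
        (by rw [EReal.coe_neg]; exact EReal.neg_lt_comm.mpr h1)
    obtain ⟨β', hβ', y, hy, hagree⟩ := my_ext_right w hwc (-b) (-aR) hlt' z hzsol C hC hzC
    have hkey := hmax ((-β' : ℝ) : EReal) b (fun t => y (-t)) ?_ le_rfl ?_ ?_
    · have : (-β' : ℝ) = aR := by
        have := hkey.1
        rw [← hcoea] at this
        exact_mod_cast this
      linarith
    · rw [← hcoea]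
      exact le_of_lt (EReal.coe_lt_coe_iff.mpr (by linarith))
    · intro t h1 h2
      have hm1 : -b < ((-t : ℝ) : EReal) := by
        rw [EReal.coe_neg]; exact EReal.neg_lt_neg_iff.mpr h2
      have h1' : -β' < t := EReal.coe_lt_coe_iff.mp h1
      have hm2 : ((-t : ℝ) : EReal) < ((β' : ℝ) : EReal) :=
        EReal.coe_lt_coe_iff.mpr (by linarith)
      have hdy := hy (-t) hm1 hm2
      have := hdy.scomp (x := t) (hasDerivAt_neg t)
      simpa [hw, Function.comp_def] using this
    · intro t h1 h2
      have hm1 : -b < ((-t : ℝ) : EReal) := by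
        rw [EReal.coe_neg]; exact EReal.neg_lt_neg_iff.mpr h2
      have hm2 : ((-t : ℝ) : EReal) < ((-aR : ℝ) : EReal) := by
        rw [EReal.coe_neg, EReal.coe_neg, hcoea]
        exact EReal.neg_lt_neg_iff.mpr h1
      have := hagree (-t) hm1 hm2
      simpa [hz] using this
  · -- b = ⊤
    by_contra hb
    have hbB : b ≠ ⊥ := ne_bot_of_gt hlt
    set βR := b.toReal with hβR
    have hcoeb : (βR : EReal) = b := EReal.coe_toReal hb hbB
    have hlt' : a < ((βR : ℝ) : EReal) := by rw [hcoeb]; exact hlt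
    have hxsol : ∀ t : ℝ, a < (t : EReal) → (t : EReal) < ((βR : ℝ) : EReal) →
        HasDerivAt x (v (x t)) t := by
      intro t h1 h2; exact hx t h1 (by rw [← hcoeb]; exact h2)
    have hxC' : ∀ t : ℝ, a < (t : EReal) → (t : EReal) < ((βR : ℝ) : EReal) → x t ∈ C := by
      intro t h1 h2; exact hxC t h1 (by rw [← hcoeb]; exact h2)
    obtain ⟨β', hβ', y, hy, hagree⟩ := my_ext_right v hv a βR hlt' x hxsol C hC hxC'
    have hkey := hmax a ((β' : ℝ) : EReal) y le_rfl ?_ hy ?_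
    · have : (β' : ℝ) = βR := by
        have := hkey.2
        rw [← hcoeb] at this
        exact_mod_cast this
      linarith
    · rw [← hcoeb]
      exact le_of_lt (EReal.coe_lt_coe_iff.mpr hβ')
    · intro t h1 h2
      exact hagree t h1 (by rw [hcoeb]; exact h2)
end

section
/- Let U be an open subset of a finite-dimensional real normed vector space E, let v : U → E be a C² vector field with a zero at z ∈ U, and set A = Dv(z) (the Fréchet derivative of v at z). Let f : U → ℝ be a C² function with Df(z) = 0, and define σ : U → ℝ as the directional derivative σ(x) = Df(x)(v(x)). Then Dσ(z) = 0, and the second derivative (Hessian) of σ at z satisfies D²σ(z)(u, u) = 2·D²f(z)(A u, u) for every u ∈ E. -/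
/-!
By the product rule, `σ(x) = Df(x)(v x)` has `Dσ(x) = Df(x) ∘ Dv(x) + D²f(x)(·, v x)`. For a `C²`
function `f`, `D²f` is merely continuous, but because `v z = 0` the second term is still
differentiable at `z`, with derivative `u ↦ D²f(z)(·, A u)`: the error `(D²f(x) - D²f(z))(·, v x)`
is `o(1) · O(x - z)`. Evaluating on the diagonal and using the symmetry of `D²f(z)` gives the
Hessian of `σ`.
-/

open Asymptotics Filter Topology ContinuousLinearMap

section ClmApply

variable {𝕜 E F G : Type*} [NontriviallyNormedField 𝕜]
  [NormedAddCommGroup E] [NormedSpace 𝕜 E] [NormedAddCommGroup F] [NormedSpace 𝕜 F]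
  [NormedAddCommGroup G] [NormedSpace 𝕜 G]

theorem hasFDerivAt_clm_apply_of_continuousAt_of_eq_zero {c : E → F →L[𝕜] G} {u : E → F}
    {A : E →L[𝕜] F} {z : E} (hc : ContinuousAt c z) (hu : HasFDerivAt u A z) (huz : u z = 0) :
    HasFDerivAt (fun x => c x (u x)) ((c z).comp A) z := by
  have hc' : (fun x => ‖c x - c z‖) =o[𝓝 z] fun _ => (1 : ℝ) :=
    (isLittleO_one_iff ℝ).2 (tendsto_sub_nhds_zero_iff.2 hc.tendsto) |>.norm_left
  have hu' : (fun x => ‖u x‖) =O[𝓝 z] fun x => ‖x - z‖ := by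
    simpa [huz] using hu.isBigO_sub.norm_norm
  have hprod : (fun x => ‖c x - c z‖ * ‖u x‖) =o[𝓝 z] fun x => x - z :=
    ((hc'.mul_isBigO hu').congr_right fun _ => one_mul _).of_norm_right
  have hvar : (fun x => (c x - c z) (u x)) =o[𝓝 z] fun x => x - z :=
    isBoundedBilinearMap_apply.isBigO_comp.trans_isLittleO hprod
  have hlin : (fun x => c z (u x - u z - A (x - z))) =o[𝓝 z] fun x => x - z :=
    ((c z).isBigO_comp _ _).trans_isLittleO hu.isLittleO
  refine .of_isLittleO ((hvar.add hlin).congr_left fun x => ?_)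
  simp [huz]

end ClmApply

section DerivAlongVectorField

variable {𝕜 E F : Type*} [RCLike 𝕜] [NormedAddCommGroup E] [NormedSpace 𝕜 E]
  [NormedAddCommGroup F] [NormedSpace 𝕜 F] {f : E → F} {v : E → E} {z : E}

theorem fderiv_fderiv_apply_eventuallyEq (hf : ContDiffAt 𝕜 2 f z) (hv : ContDiffAt 𝕜 1 v z) :
    fderiv 𝕜 (fun x => fderiv 𝕜 f x (v x)) =ᶠ[𝓝 z]
      fun x => (fderiv 𝕜 f x).comp (fderiv 𝕜 v x) + (fderiv 𝕜 (fderiv 𝕜 f) x).flip (v x) := by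
  filter_upwards [hf.eventually (by simp), hv.eventually (by simp)] with x hfx hvx
  have hf' : DifferentiableAt 𝕜 (fderiv 𝕜 f) x :=
    (hfx.fderiv_right (m := 1) le_rfl).differentiableAt one_ne_zero
  exact (hf'.hasFDerivAt.clm_apply (hvx.differentiableAt one_ne_zero).hasFDerivAt).fderiv

theorem fderiv_fderiv_apply_of_eq_zero (hf : ContDiffAt 𝕜 2 f z) (hv : ContDiffAt 𝕜 1 v z)
    (hvz : v z = 0) :
    fderiv 𝕜 (fun x => fderiv 𝕜 f x (v x)) z = (fderiv 𝕜 f z).comp (fderiv 𝕜 v z) := by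
  simp [(fderiv_fderiv_apply_eventuallyEq hf hv).eq_of_nhds, hvz]

theorem fderiv_fderiv_fderiv_apply_of_eq_zero (hf : ContDiffAt 𝕜 2 f z) (hv : ContDiffAt 𝕜 2 v z)
    (hvz : v z = 0) (u w : E) :
    fderiv 𝕜 (fderiv 𝕜 (fun x => fderiv 𝕜 f x (v x))) z u w =
      fderiv 𝕜 f z (fderiv 𝕜 (fderiv 𝕜 v) z u w) +
        fderiv 𝕜 (fderiv 𝕜 f) z (fderiv 𝕜 v z u) w +
        fderiv 𝕜 (fderiv 𝕜 f) z (fderiv 𝕜 v z w) u := by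
  have hf1 : ContDiffAt 𝕜 1 (fderiv 𝕜 f) z := hf.fderiv_right le_rfl
  have hv1 : ContDiffAt 𝕜 1 (fderiv 𝕜 v) z := hv.fderiv_right le_rfl
  have hcomp := (hf1.differentiableAt one_ne_zero).hasFDerivAt.clm_comp
    (hv1.differentiableAt one_ne_zero).hasFDerivAt
  have hflip := hasFDerivAt_clm_apply_of_continuousAt_of_eq_zero
    (c := fun x => (fderiv 𝕜 (fderiv 𝕜 f) x).flip)
    ((flipₗᵢ 𝕜 E E F).continuous.continuousAt.comp (hf1.continuousAt_fderiv one_ne_zero))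
    (hv.differentiableAt two_ne_zero).hasFDerivAt hvz
  have hsymm := hf.isSymmSndFDerivAt (by simp [minSmoothness_of_isRCLikeNormedField])
  rw [(fderiv_fderiv_apply_eventuallyEq hf (hv.of_le one_le_two)).fderiv_eq,
    (hcomp.fun_add hflip).fderiv]
  simp only [add_apply, comp_apply, compL_apply, flip_apply, hsymm u, hsymm w]
  abel

end DerivAlongVectorField

theorem stmt_2_general {E : Type*} [NormedAddCommGroup E] [NormedSpace ℝ E]
    (U : Set E) (hU : IsOpen U) (z : E) (hz : z ∈ U)
    (v : E → E) (hv : ContDiffOn ℝ 2 v U) (hvz : v z = 0)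
    (f : E → ℝ) (hf : ContDiffOn ℝ 2 f U) (hfz : fderiv ℝ f z = 0)
    (σ : E → ℝ) (hσ : ∀ x ∈ U, σ x = fderiv ℝ f x (v x)) :
    fderiv ℝ σ z = 0 ∧
    ∀ u : E, fderiv ℝ (fderiv ℝ σ) z u u
      = 2 * fderiv ℝ (fderiv ℝ f) z (fderiv ℝ v z u) u := by
  have hσ_eq : σ =ᶠ[𝓝 z] fun x => fderiv ℝ f x (v x) :=
    eventually_of_mem (hU.mem_nhds hz) hσ
  have hf_z := hf.contDiffAt (hU.mem_nhds hz)
  have hv_z := hv.contDiffAt (hU.mem_nhds hz)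
  refine ⟨?_, fun u => ?_⟩
  · rw [hσ_eq.fderiv_eq, fderiv_fderiv_apply_of_eq_zero hf_z (hv_z.of_le one_le_two) hvz, hfz,
      zero_comp]
  · rw [hσ_eq.fderiv.fderiv_eq, fderiv_fderiv_fderiv_apply_of_eq_zero hf_z hv_z hvz, hfz,
      zero_apply, zero_add, two_mul]

/-- If `v` is a `C²` vector field on an open set `U` with `v z = 0`,
`A = Dv(z)`, and `f : U → ℝ` is `C²` with `Df(z) = 0`, then the directional
derivative `σ(x) = Df(x)(v(x))` has `Dσ(z) = 0` and Hessian
`D²σ(z)(u,u) = 2 · D²f(z)(A u, u)`. -/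
theorem stmt_2 {E : Type*} [NormedAddCommGroup E] [NormedSpace ℝ E]
    [FiniteDimensional ℝ E]
    (U : Set E) (hU : IsOpen U) (z : E) (hz : z ∈ U)
    (v : E → E) (hv : ContDiffOn ℝ 2 v U) (hvz : v z = 0)
    (f : E → ℝ) (hf : ContDiffOn ℝ 2 f U) (hfz : fderiv ℝ f z = 0)
    (σ : E → ℝ) (hσ : ∀ x ∈ U, σ x = fderiv ℝ f x (v x)) :
    fderiv ℝ σ z = 0 ∧
    ∀ u : E, fderiv ℝ (fderiv ℝ σ) z u u
      = 2 * fderiv ℝ (fderiv ℝ f) z (fderiv ℝ v z u) u :=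
  stmt_2_general U hU z hz v hv hvz f hf hfz σ hσ
end

section
/- Let y : I → ℝ^m be a solution of the system (hcu) on an open interval I. Then the function t ↦ s(t) = 2·Σ_{k=1}^m y_k'(t) − Q(t) − S(t)² is constant on I. -/
/-!
Write `S = ∑ yₖ` and `Q = ∑ yₖ²`. Summing (hcu) over `j`, the right-hand sides add up to
`S Q - Q S = 0`, so `∑ yⱼ'' = S ∑ yⱼ' + ∑ yⱼ yⱼ'`. This is exactly half the derivative of
`∑ yₖ² + S²`, hence `s' = 0`, and a function with zero derivative on an interval is constant.
-/

open Finset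

theorem Convex.is_const_of_hasDerivAt_eq_zero {E : Type*} [NormedAddCommGroup E]
    [NormedSpace ℝ E] {s : Set ℝ} (hs : Convex ℝ s) {f : ℝ → E}
    (hf : ∀ x ∈ s, HasDerivAt f 0 x) {x y : ℝ} (hx : x ∈ s) (hy : y ∈ s) : f x = f y := by
  have h := hs.norm_image_sub_le_of_norm_hasDerivWithin_le
    (fun z hz => (hf z hz).hasDerivWithinAt) (fun _ _ => norm_zero.le) hx hy
  rw [zero_mul, norm_le_zero_iff, sub_eq_zero] at h
  exact h.symm

section Hcu

variable {ι : Type*} [Fintype ι]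

theorem sum_mul_sum_sq_sub_sq_mul_sum (x : ι → ℝ) :
    ∑ j, (x j * ∑ k, x k ^ 2 - x j ^ 2 * ∑ k, x k) = 0 := by
  rw [sum_sub_distrib, ← sum_mul, ← sum_mul, mul_comm, sub_self]

def hcuInvariant (y y' : ℝ → ι → ℝ) (t : ℝ) : ℝ :=
  2 * (∑ k, y' t k) - (∑ k, y t k ^ 2) - (∑ k, y t k) ^ 2

variable {y y' y'' : ℝ → ι → ℝ} {t : ℝ}

theorem sum_acceleration_eq_of_hcu
    (hcu : ∀ j, y'' t j - ((∑ k, y t k) + y t j) * y' t j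
        = y t j * (∑ k, y t k ^ 2) - y t j ^ 2 * (∑ k, y t k)) :
    ∑ j, y'' t j = (∑ k, y t k) * (∑ j, y' t j) + ∑ j, y t j * y' t j := by
  have h := sum_mul_sum_sq_sub_sq_mul_sum (y t)
  simp only [← hcu, sum_sub_distrib, add_mul, sum_add_distrib, ← mul_sum] at h
  linarith

theorem hasDerivAt_hcuInvariant (hy : ∀ j, HasDerivAt (fun s => y s j) (y' t j) t)
    (hy' : ∀ j, HasDerivAt (fun s => y' s j) (y'' t j) t) :
    HasDerivAt (hcuInvariant y y')
      (2 * (∑ j, y'' t j) - 2 * (∑ j, y t j * y' t j)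
        - 2 * (∑ k, y t k) * (∑ j, y' t j)) t := by
  have hS : HasDerivAt (fun s => ∑ k, y s k) (∑ j, y' t j) t := .fun_sum fun j _ => hy j
  have hQ : HasDerivAt (fun s => ∑ k, y s k ^ 2) (∑ j, 2 * (y t j * y' t j)) t :=
    .fun_sum fun j _ => by simpa [mul_assoc] using (hy j).fun_pow 2
  have hA : HasDerivAt (fun s => ∑ k, y' s k) (∑ j, y'' t j) t := .fun_sum fun j _ => hy' j
  have h := ((hA.const_mul 2).fun_sub hQ).fun_sub (hS.fun_pow 2)
  exact h.congr_deriv (by rw [← mul_sum]; norm_num)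

theorem hasDerivAt_hcuInvariant_zero (hy : ∀ j, HasDerivAt (fun s => y s j) (y' t j) t)
    (hy' : ∀ j, HasDerivAt (fun s => y' s j) (y'' t j) t)
    (hcu : ∀ j, y'' t j - ((∑ k, y t k) + y t j) * y' t j
        = y t j * (∑ k, y t k ^ 2) - y t j ^ 2 * (∑ k, y t k)) :
    HasDerivAt (hcuInvariant y y') 0 t := by
  convert hasDerivAt_hcuInvariant hy hy' using 1
  rw [sum_acceleration_eq_of_hcu hcu]
  ring

end Hcu

theorem stmt_4_general (m : ℕ)
    (I : Set ℝ) (hIconn : I.OrdConnected)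
    (y y' y'' : ℝ → Fin m → ℝ)
    (hy : ∀ j, ∀ t ∈ I, HasDerivAt (fun s => y s j) (y' t j) t)
    (hy' : ∀ j, ∀ t ∈ I, HasDerivAt (fun s => y' s j) (y'' t j) t)
    (hcu : ∀ j, ∀ t ∈ I,
      y'' t j - ((∑ k, y t k) + y t j) * y' t j
        = y t j * (∑ k, (y t k) ^ 2) - (y t j) ^ 2 * (∑ k, y t k)) :
    ∀ t₁ ∈ I, ∀ t₂ ∈ I,
      2 * (∑ k, y' t₁ k) - (∑ k, (y t₁ k) ^ 2) - (∑ k, y t₁ k) ^ 2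
        = 2 * (∑ k, y' t₂ k) - (∑ k, (y t₂ k) ^ 2) - (∑ k, y t₂ k) ^ 2 :=
  fun _ ht₁ _ ht₂ => hIconn.convex.is_const_of_hasDerivAt_eq_zero
    (f := hcuInvariant y y')
    (fun t ht => hasDerivAt_hcuInvariant_zero (fun j => hy j t ht) (fun j => hy' j t ht)
      (fun j => hcu j t ht)) ht₁ ht₂

/-- Along any solution of the system (hcu) on an open interval `I`,
the quantity `s(t) = 2·Σ yₖ'(t) − Σ yₖ(t)² − (Σ yₖ(t))²` is constant. -/
theorem stmt_4 (m : ℕ) (hm : 1 ≤ m)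
    (I : Set ℝ) (hIopen : IsOpen I) (hIconn : I.OrdConnected)
    (y y' y'' : ℝ → Fin m → ℝ)
    (hy : ∀ j, ∀ t ∈ I, HasDerivAt (fun s => y s j) (y' t j) t)
    (hy' : ∀ j, ∀ t ∈ I, HasDerivAt (fun s => y' s j) (y'' t j) t)
    (hcu : ∀ j, ∀ t ∈ I,
      y'' t j - ((∑ k, y t k) + y t j) * y' t j
        = y t j * (∑ k, (y t k) ^ 2) - (y t j) ^ 2 * (∑ k, y t k)) :
    ∀ t₁ ∈ I, ∀ t₂ ∈ I,
      2 * (∑ k, y' t₁ k) - (∑ k, (y t₁ k) ^ 2) - (∑ k, y t₁ k) ^ 2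
        = 2 * (∑ k, y' t₂ k) - (∑ k, (y t₂ k) ^ 2) - (∑ k, y t₂ k) ^ 2 :=
  stmt_4_general m I hIconn y y' y'' hy hy' hcu
end

section
/- Let y : ℝ → ℝ^m be a solution of the system (hcu) defined on all of ℝ which is not identically equal to zero. Then s(t) = 2·Σ_{k=1}^m y_k'(t) − Q(t) − S(t)² is strictly negative for every t ∈ ℝ. -/
/-!
Summing the equations of (hcu) gives `Σ yₖ'' = S S' + Σ yₖ yₖ'`, which is exactly what makes
`s` constant. If `s ≥ 0`, then `S' ≥ (Q + S²) / 2 ≥ S² / 2`, and a solution of this Riccati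
inequality defined on all of `ℝ` vanishes identically: where `S > 0`, `1 / S + t / 2` is
nonincreasing, so `1 / S` reaches `0` in finite time; reflecting `t ↦ -t` handles `S < 0`.
Then `S' = 0`, so `Q ≤ -s ≤ 0` and `y = 0`.
-/

open Finset

theorem nonpos_of_hasDerivAt_of_mul_sq_le {f f' : ℝ → ℝ} {c : ℝ} (hc : 0 < c)
    (hf : ∀ t, HasDerivAt f (f' t) t) (hf' : ∀ t, c * f t ^ 2 ≤ f' t) (t : ℝ) : f t ≤ 0 := by
  by_contra! hpos
  have hmono : Monotone f :=
    monotone_of_hasDerivAt_nonneg hf fun u => (mul_nonneg hc.le (sq_nonneg _)).trans (hf' u)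
  have hpos_on : ∀ u ∈ Set.Ici t, 0 < f u := fun u hu => hpos.trans_le (hmono hu)
  have hanti : AntitoneOn (fun u => (f u)⁻¹ + c * u) (Set.Ici t) := by
    have hder : ∀ u ∈ Set.Ici t, HasDerivAt (fun u => (f u)⁻¹ + c * u) (-f' u / f u ^ 2 + c) u :=
      fun u hu =>
        ((hf u).inv (hpos_on u hu).ne').add ((hasDerivAt_id u).const_mul c) |>.congr_deriv (by ring)
    refine antitoneOn_of_hasDerivWithinAt_nonpos (convex_Ici t)
      (fun u hu => (hder u hu).continuousAt.continuousWithinAt)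
      (fun u hu => (hder u (interior_subset hu)).hasDerivWithinAt) fun u hu => ?_
    have hfu := hpos_on u (interior_subset hu)
    rw [neg_div, neg_add_nonpos_iff, le_div_iff₀ (by positivity)]
    exact hf' u
  -- at `t₁` the antitone bound would force `1 / f t₁ ≤ 0`
  set t₁ := t + (c * f t)⁻¹
  have ht₁ : t ≤ t₁ := le_add_of_nonneg_right (by positivity)
  have hbound : (f t₁)⁻¹ + c * t₁ ≤ (f t)⁻¹ + c * t := hanti Set.self_mem_Ici ht₁ ht₁
  have hct₁ : c * t₁ = c * t + (f t)⁻¹ := by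
    simp only [t₁]; field_simp
  linarith [inv_pos.mpr (hpos_on t₁ ht₁)]

theorem eq_zero_of_hasDerivAt_of_mul_sq_le {f f' : ℝ → ℝ} {c : ℝ} (hc : 0 < c)
    (hf : ∀ t, HasDerivAt f (f' t) t) (hf' : ∀ t, c * f t ^ 2 ≤ f' t) (t : ℝ) : f t = 0 := by
  have hreflect : ∀ u, HasDerivAt (fun u => -f (-u)) (f' (-u)) u := fun u =>
    ((hf (-u)).comp u (hasDerivAt_neg' u)).neg.congr_deriv (by ring)
  have hnonneg := nonpos_of_hasDerivAt_of_mul_sq_le hc hreflect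
    (fun u => by simpa using hf' (-u)) (-t)
  rw [neg_neg, neg_nonpos] at hnonneg
  exact le_antisymm (nonpos_of_hasDerivAt_of_mul_sq_le hc hf hf' t) hnonneg

section
variable {ι : Type*} [Fintype ι] {y y' y'' : ℝ → ι → ℝ} {t : ℝ}

theorem sum_second_deriv_eq
    (hcu : ∀ j, y'' t j - ((∑ k, y t k) + y t j) * y' t j
        = y t j * (∑ k, (y t k) ^ 2) - (y t j) ^ 2 * (∑ k, y t k)) :
    ∑ k, y'' t k = (∑ k, y t k) * (∑ k, y' t k) + ∑ k, y t k * y' t k := by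
  have hy'' : ∀ j, y'' t j = (∑ k, y t k) * y' t j + y t j * y' t j
      + (y t j * (∑ k, (y t k) ^ 2) - (y t j) ^ 2 * (∑ k, y t k)) := fun j => by
    linarith [hcu j]
  simp only [hy'', sum_add_distrib, sum_sub_distrib, ← mul_sum, ← sum_mul]
  ring

theorem hasDerivAt_hcu_invariant
    (hy : ∀ j, HasDerivAt (fun s => y s j) (y' t j) t)
    (hy' : ∀ j, HasDerivAt (fun s => y' s j) (y'' t j) t)
    (hcu : ∀ j, y'' t j - ((∑ k, y t k) + y t j) * y' t j
        = y t j * (∑ k, (y t k) ^ 2) - (y t j) ^ 2 * (∑ k, y t k)) :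
    HasDerivAt (fun t => 2 * (∑ k, y' t k) - (∑ k, (y t k) ^ 2) - (∑ k, y t k) ^ 2) 0 t := by
  have hS := HasDerivAt.fun_sum fun k (_ : k ∈ univ) => hy k
  have hQ := HasDerivAt.fun_sum fun k (_ : k ∈ univ) => (hy k).fun_pow 2
  have hS' := HasDerivAt.fun_sum fun k (_ : k ∈ univ) => hy' k
  refine (((hS'.const_mul 2).sub hQ).sub (hS.fun_pow 2)).congr_deriv ?_
  simp only [sum_second_deriv_eq hcu, Nat.cast_ofNat, Nat.add_one_sub_one, pow_one, mul_assoc,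
    ← mul_sum]
  ring

end

theorem stmt_5_general (m : ℕ)
    (y y' y'' : ℝ → Fin m → ℝ)
    (hy : ∀ j, ∀ t : ℝ, HasDerivAt (fun s => y s j) (y' t j) t)
    (hy' : ∀ j, ∀ t : ℝ, HasDerivAt (fun s => y' s j) (y'' t j) t)
    (hcu : ∀ j, ∀ t : ℝ,
      y'' t j - ((∑ k, y t k) + y t j) * y' t j
        = y t j * (∑ k, (y t k) ^ 2) - (y t j) ^ 2 * (∑ k, y t k))
    (hnz : ∃ t : ℝ, ∃ j, y t j ≠ 0) :
    ∀ t : ℝ, 2 * (∑ k, y' t k) - (∑ k, (y t k) ^ 2) - (∑ k, y t k) ^ 2 < 0 := by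
  intro t₀
  by_contra! hs
  have hconst := is_const_of_deriv_eq_zero
    (fun t => (hasDerivAt_hcu_invariant (hy · t) (hy' · t) (hcu · t)).differentiableAt)
    (fun t => (hasDerivAt_hcu_invariant (hy · t) (hy' · t) (hcu · t)).deriv)
  have hQ : ∀ t, 0 ≤ ∑ k, y t k ^ 2 := fun t => sum_nonneg fun k _ => sq_nonneg _
  have hS : ∀ t, HasDerivAt (fun s => ∑ k, y s k) (∑ k, y' t k) t :=
    fun t => HasDerivAt.fun_sum fun k _ => hy k t
  have hS0 := eq_zero_of_hasDerivAt_of_mul_sq_le (c := 1 / 2) (by norm_num) hS fun t => by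
    linarith [hconst t t₀, hQ t]
  have hS'0 : ∀ t, ∑ k, y' t k = 0 := fun t =>
    (hS t).unique (by simpa [funext hS0] using hasDerivAt_const t (0 : ℝ))
  obtain ⟨t, j, hj⟩ := hnz
  have hst := hconst t t₀
  rw [hS0 t, hS'0 t] at hst
  have hQ0 : ∑ k, y t k ^ 2 = 0 := le_antisymm (by linarith) (hQ t)
  exact hj (pow_eq_zero_iff two_ne_zero |>.mp <|
    (sum_eq_zero_iff_of_nonneg fun k _ => sq_nonneg (y t k)).mp hQ0 j (mem_univ j))

/-- For a solution of the system (hcu) defined on all of `ℝ` and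
not identically zero, the constant `s(t) = 2·Σ yₖ' − Σ yₖ² − (Σ yₖ)²` is
strictly negative at every `t`. -/
theorem stmt_5 (m : ℕ) (hm : 1 ≤ m)
    (y y' y'' : ℝ → Fin m → ℝ)
    (hy : ∀ j, ∀ t : ℝ, HasDerivAt (fun s => y s j) (y' t j) t)
    (hy' : ∀ j, ∀ t : ℝ, HasDerivAt (fun s => y' s j) (y'' t j) t)
    (hcu : ∀ j, ∀ t : ℝ,
      y'' t j - ((∑ k, y t k) + y t j) * y' t j
        = y t j * (∑ k, (y t k) ^ 2) - (y t j) ^ 2 * (∑ k, y t k))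
    (hnz : ∃ t : ℝ, ∃ j, y t j ≠ 0) :
    ∀ t : ℝ, 2 * (∑ k, y' t k) - (∑ k, (y t k) ^ 2) - (∑ k, y t k) ^ 2 < 0 :=
  stmt_5_general m y y' y'' hy hy' hcu hnz
end

section
/- Let m ≥ 1 and n = m + 1. The curve y : ℝ → ℝ^m all of whose components equal y_j(t) = −2·tanh(n t) is a solution of the system (hcu) on ℝ. -/
/-!
On the diagonal `y₁ = ⋯ = yₘ = u` the right-hand side of (hcu) vanishes identically, since
`u · (m u²) - u² · (m u) = 0`, and `S + yⱼ = (m + 1) u`. So (hcu) reduces to the scalar equation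
`u'' = (m + 1) u u'`, which the kink `u(t) = -2 tanh (c t)` solves for `c = m + 1`:
its derivatives are `u' = -2c (1 - tanh² (c t))` and `u'' = c u u'`.
-/

open Real

theorem Real.hasDerivAt_tanh (x : ℝ) : HasDerivAt tanh (1 - tanh x ^ 2) x := by
  have hcosh := (cosh_pos x).ne'
  have h := (hasDerivAt_sinh x).div (hasDerivAt_cosh x) hcosh
  rw [show sinh / cosh = tanh from funext fun y => (tanh_eq_sinh_div_cosh y).symm] at h
  refine h.congr_deriv ?_
  rw [tanh_eq_sinh_div_cosh]
  field_simp

theorem Real.contDiff_tanh {n : WithTop ℕ∞} : ContDiff ℝ n tanh := by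
  rw [show tanh = fun y => sinh y / cosh y from funext tanh_eq_sinh_div_cosh]
  exact contDiff_sinh.div contDiff_cosh fun x => (cosh_pos x).ne'

theorem hasDerivAt_tanh_mul (c t : ℝ) :
    HasDerivAt (fun s => tanh (c * s)) (c * (1 - tanh (c * t) ^ 2)) t :=
  ((hasDerivAt_tanh (c * t)).comp t ((hasDerivAt_id t).const_mul c)).congr_deriv (by ring)

theorem deriv_neg_two_mul_tanh_mul (c : ℝ) :
    deriv (fun s => -2 * tanh (c * s)) = fun t => -2 * c * (1 - tanh (c * t) ^ 2) := by
  funext t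
  rw [((hasDerivAt_tanh_mul c t).const_mul (-2)).deriv]
  ring

theorem deriv_deriv_neg_two_mul_tanh_mul (c t : ℝ) :
    deriv (deriv fun s => -2 * tanh (c * s)) t
      = c * (-2 * tanh (c * t)) * deriv (fun s => -2 * tanh (c * s)) t := by
  rw [deriv_neg_two_mul_tanh_mul,
    (((hasDerivAt_tanh_mul c t).fun_pow 2).const_sub 1 |>.const_mul (-2 * c)).deriv]
  ring

theorem stmt_6_general (m n : ℕ) (hn : n = m + 1)
    (y : ℝ → Fin m → ℝ)
    (hy : ∀ t : ℝ, ∀ j, y t j = -2 * Real.tanh ((n : ℝ) * t)) :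
    (∀ j, ContDiff ℝ 2 (fun t => y t j)) ∧
    ∀ j, ∀ t : ℝ,
      deriv (deriv (fun s => y s j)) t
          - ((∑ k, y t k) + y t j) * deriv (fun s => y s j) t
        = y t j * (∑ k, (y t k) ^ 2) - (y t j) ^ 2 * (∑ k, y t k) := by
  have hyj : ∀ j, (fun t => y t j) = fun t => -2 * tanh ((n : ℝ) * t) :=
    fun j => funext fun t => hy t j
  refine ⟨fun j => hyj j ▸ contDiff_const.mul (contDiff_tanh.comp (contDiff_const.mul contDiff_id)),
    fun j t => ?_⟩
  have hsum : ∑ k, y t k = m * (-2 * tanh ((n : ℝ) * t)) := by simp [hy t]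
  have hsum_sq : ∑ k, y t k ^ 2 = m * (-2 * tanh ((n : ℝ) * t)) ^ 2 := by simp [hy t]
  rw [hyj j, deriv_deriv_neg_two_mul_tanh_mul, hsum, hsum_sq, hy t j, hn]
  push_cast
  ring

/-- For `n = m + 1`, the curve all of whose components equal
`yⱼ(t) = −2·tanh(n t)` is a (twice differentiable) solution of the system (hcu)
on `ℝ`. -/
theorem stmt_6 (m n : ℕ) (hm : 1 ≤ m) (hn : n = m + 1)
    (y : ℝ → Fin m → ℝ)
    (hy : ∀ t : ℝ, ∀ j, y t j = -2 * Real.tanh ((n : ℝ) * t)) :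
    (∀ j, ContDiff ℝ 2 (fun t => y t j)) ∧
    ∀ j, ∀ t : ℝ,
      deriv (deriv (fun s => y s j)) t
          - ((∑ k, y t k) + y t j) * deriv (fun s => y s j) t
        = y t j * (∑ k, (y t k) ^ 2) - (y t j) ^ 2 * (∑ k, y t k) :=
  stmt_6_general m n hn y hy
end

section
/- Let m ≥ 1 and n = m + 1. The curve y : (−π/(2n), π/(2n)) → ℝ^m all of whose components equal y_j(t) = 2·tan(n t) is a solution of the system (hcu) on the interval (−π/(2n), π/(2n)). -/
/-!
With `T = tan (n t)` one has `T' = n (1 + T²)` and `T'' = 2 n T T'`, so `y = 2 T` satisfies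
`y'' = n y y'`. All components being equal, `S + y_j = (m + 1) y = n y`, so the left-hand side
of (hcu) vanishes, and the right-hand side `y · m y² - y² · m y` vanishes identically.
-/

open Real Set Filter Topology

section TanMul

variable {c t : ℝ}

lemma cos_mul_pos_of_mem_Ioo (hc : 0 < c) (ht : t ∈ Ioo (-(π / (2 * c))) (π / (2 * c))) :
    0 < cos (c * t) := by
  have hpi : c * (π / (2 * c)) = π / 2 := by field_simp
  apply cos_pos_of_mem_Ioo
  constructor
  · nlinarith [ht.1]
  · nlinarith [ht.2]

lemma contDiffAt_tan_mul {k : WithTop ℕ∞} (h : cos (c * t) ≠ 0) :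
    ContDiffAt ℝ k (fun s => tan (c * s)) t :=
  (contDiffAt_tan.2 h).comp t (contDiffAt_const.mul contDiffAt_id)

lemma hasDerivAt_tan_mul (h : cos (c * t) ≠ 0) :
    HasDerivAt (fun s => tan (c * s)) (c * (1 + tan (c * t) ^ 2)) t := by
  refine ((hasDerivAt_tan h).comp t ((hasDerivAt_id t).const_mul c)).congr_deriv ?_
  rw [← inv_inv (1 + tan (c * t) ^ 2), inv_one_add_tan_sq h]
  simp [div_eq_mul_inv, mul_comm]

lemma deriv_deriv_tan_mul (hc : 0 < c) (ht : t ∈ Ioo (-(π / (2 * c))) (π / (2 * c))) :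
    deriv (deriv fun s => tan (c * s)) t = 2 * c ^ 2 * tan (c * t) * (1 + tan (c * t) ^ 2) := by
  have hderiv : deriv (fun s => tan (c * s)) =ᶠ[𝓝 t] fun s => c * (1 + tan (c * s) ^ 2) := by
    filter_upwards [isOpen_Ioo.mem_nhds ht] with s hs
    exact (hasDerivAt_tan_mul (cos_mul_pos_of_mem_Ioo hc hs).ne').deriv
  rw [hderiv.deriv_eq]
  have h := (((hasDerivAt_tan_mul (cos_mul_pos_of_mem_Ioo hc ht).ne').fun_pow 2).const_add 1).const_mul c
  rw [h.deriv]
  ring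

end TanMul

theorem stmt_7_general (m n : ℕ) (hn : n = m + 1)
    (y : ℝ → Fin m → ℝ)
    (hy : ∀ t : ℝ, ∀ j, y t j = 2 * Real.tan ((n : ℝ) * t)) :
    (∀ j, ∀ t ∈ Set.Ioo (-(Real.pi / (2 * (n : ℝ)))) (Real.pi / (2 * (n : ℝ))),
      ContDiffAt ℝ 2 (fun s => y s j) t) ∧
    ∀ j, ∀ t ∈ Set.Ioo (-(Real.pi / (2 * (n : ℝ)))) (Real.pi / (2 * (n : ℝ))),
      deriv (deriv (fun s => y s j)) t
          - ((∑ k, y t k) + y t j) * deriv (fun s => y s j) t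
        = y t j * (∑ k, (y t k) ^ 2) - (y t j) ^ 2 * (∑ k, y t k) := by
  have hn' : (n : ℝ) = m + 1 := by exact_mod_cast hn
  have hpos : (0 : ℝ) < n := hn' ▸ Nat.cast_add_one_pos m
  have hcurve : ∀ j, (fun s => y s j) = fun s => 2 * tan (n * s) :=
    fun j => funext fun s => hy s j
  refine ⟨fun j t ht => ?_, fun j t ht => ?_⟩
  · rw [hcurve]
    exact contDiffAt_const.mul (contDiffAt_tan_mul (cos_mul_pos_of_mem_Ioo hpos ht).ne')
  · simp only [hcurve, deriv_const_mul_field', hy t, Finset.sum_const, Finset.card_univ,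
      Fintype.card_fin, nsmul_eq_mul]
    rw [deriv_deriv_tan_mul hpos ht,
      (hasDerivAt_tan_mul (cos_mul_pos_of_mem_Ioo hpos ht).ne').deriv, hn']
    ring

/-- For `n = m + 1`, the curve all of whose components equal
`yⱼ(t) = 2·tan(n t)` is a (twice differentiable) solution of the system (hcu)
on the interval `(−π/(2n), π/(2n))`. -/
theorem stmt_7 (m n : ℕ) (hm : 1 ≤ m) (hn : n = m + 1)
    (y : ℝ → Fin m → ℝ)
    (hy : ∀ t : ℝ, ∀ j, y t j = 2 * Real.tan ((n : ℝ) * t)) :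
    (∀ j, ∀ t ∈ Set.Ioo (-(Real.pi / (2 * (n : ℝ)))) (Real.pi / (2 * (n : ℝ))),
      ContDiffAt ℝ 2 (fun s => y s j) t) ∧
    ∀ j, ∀ t ∈ Set.Ioo (-(Real.pi / (2 * (n : ℝ)))) (Real.pi / (2 * (n : ℝ))),
      deriv (deriv (fun s => y s j)) t
          - ((∑ k, y t k) + y t j) * deriv (fun s => y s j) t
        = y t j * (∑ k, (y t k) ^ 2) - (y t j) ^ 2 * (∑ k, y t k) :=
  stmt_7_general m n hn y hy
end

section
/- For every (y, p) ∈ ℝ^m × ℝ^m, the Fréchet derivative of the function s at (y, p) applied to the vector v(y, p) is zero; that is, the vector field v is tangent to the level sets of s. Explicitly: Σ_{j=1}^m [(S + y_j)p_j + Q·y_j − S·y_j²] = Σ_{j=1}^m y_j p_j + S·(Σ_{j=1}^m p_j), where S = Σ_k y_k and Q = Σ_k y_k². -/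
/-!
Differentiating `s` gives `Ds(y, p)(a, b) = 2 Σ bⱼ - 2 Σ yⱼ aⱼ - 2 S Σ aⱼ`. Along `v` we have
`a = p` and `b = p'`; in `Σ p'ⱼ` the terms `Q yⱼ - S yⱼ²` add up to `Q S - S Q = 0`, and what
remains, `Σ yⱼ pⱼ + S Σ pⱼ`, is exactly cancelled by the other two terms.
-/

open Finset

variable {ι : Type*} [Fintype ι]

def accel {R : Type*} [CommRing R] (y p : ι → R) (j : ι) : R :=
  ((∑ k, y k) + y j) * p j + (∑ k, y k ^ 2) * y j - (∑ k, y k) * y j ^ 2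

def levelFn (yp : (ι → ℝ) × (ι → ℝ)) : ℝ :=
  2 * ∑ k, yp.2 k - ∑ k, yp.1 k ^ 2 - (∑ k, yp.1 k) ^ 2

theorem sum_accel {R : Type*} [CommRing R] (y p : ι → R) :
    ∑ j, accel y p j = ∑ j, y j * p j + (∑ k, y k) * ∑ j, p j := by
  simp only [accel, add_mul, sum_add_distrib, sum_sub_distrib, ← mul_sum]
  ring

theorem fderiv_levelFn_apply (y p a b : ι → ℝ) :
    fderiv ℝ levelFn (y, p) (a, b)
      = 2 * ∑ k, b k - 2 * ∑ k, y k * a k - 2 * (∑ k, y k) * ∑ k, a k := by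
  have hy (k : ι) := hasFDerivAt_pi'.1 (hasFDerivAt_fst (𝕜 := ℝ) (p := (y, p))) k
  have hp (k : ι) := hasFDerivAt_pi'.1 (hasFDerivAt_snd (𝕜 := ℝ) (p := (y, p))) k
  have hS := HasFDerivAt.fun_sum (u := univ) fun k _ => hy k
  have hD : HasFDerivAt levelFn _ (y, p) :=
    (((HasFDerivAt.fun_sum (u := univ) fun k _ => hp k).const_mul 2).fun_sub
      (HasFDerivAt.fun_sum (u := univ) fun k _ => (hy k).pow 2)).fun_sub (hS.pow 2)
  rw [hD.fderiv]
  simp [mul_sum, mul_assoc]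

theorem fderiv_levelFn_apply_accel (y p : ι → ℝ) :
    fderiv ℝ levelFn (y, p) (p, accel y p) = 0 := by
  rw [fderiv_levelFn_apply, sum_accel]
  ring

theorem stmt_11_general (m : ℕ)
    (v : (Fin m → ℝ) × (Fin m → ℝ) → (Fin m → ℝ) × (Fin m → ℝ))
    (hv : ∀ yp : (Fin m → ℝ) × (Fin m → ℝ), v yp = (yp.2, fun j =>
      ((∑ k, yp.1 k) + yp.1 j) * yp.2 j + (∑ k, (yp.1 k) ^ 2) * yp.1 j
        - (∑ k, yp.1 k) * (yp.1 j) ^ 2))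
    (s : (Fin m → ℝ) × (Fin m → ℝ) → ℝ)
    (hs : ∀ yp : (Fin m → ℝ) × (Fin m → ℝ),
      s yp = 2 * (∑ k, yp.2 k) - (∑ k, (yp.1 k) ^ 2) - (∑ k, yp.1 k) ^ 2) :
    ∀ yp : (Fin m → ℝ) × (Fin m → ℝ),
      fderiv ℝ s yp (v yp) = 0 ∧
      (∑ j, (((∑ k, yp.1 k) + yp.1 j) * yp.2 j + (∑ k, (yp.1 k) ^ 2) * yp.1 j
          - (∑ k, yp.1 k) * (yp.1 j) ^ 2))
        = (∑ j, yp.1 j * yp.2 j) + (∑ k, yp.1 k) * (∑ j, yp.2 j) := by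
  obtain rfl : s = levelFn := funext hs
  rintro ⟨y, p⟩
  rw [hv]
  exact ⟨fderiv_levelFn_apply_accel y p, sum_accel y p⟩

/-- The vector field `v` of the first-order system is tangent to
the level sets of `s`: at every `(y, p)`, `Ds(y,p)(v(y,p)) = 0`; explicitly,
`Σⱼ [(S + yⱼ)pⱼ + Q·yⱼ − S·yⱼ²] = Σⱼ yⱼ pⱼ + S·(Σⱼ pⱼ)`. -/
theorem stmt_11 (m : ℕ) (hm : 1 ≤ m)
    (v : (Fin m → ℝ) × (Fin m → ℝ) → (Fin m → ℝ) × (Fin m → ℝ))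
    (hv : ∀ yp : (Fin m → ℝ) × (Fin m → ℝ), v yp = (yp.2, fun j =>
      ((∑ k, yp.1 k) + yp.1 j) * yp.2 j + (∑ k, (yp.1 k) ^ 2) * yp.1 j
        - (∑ k, yp.1 k) * (yp.1 j) ^ 2))
    (s : (Fin m → ℝ) × (Fin m → ℝ) → ℝ)
    (hs : ∀ yp : (Fin m → ℝ) × (Fin m → ℝ),
      s yp = 2 * (∑ k, yp.2 k) - (∑ k, (yp.1 k) ^ 2) - (∑ k, yp.1 k) ^ 2) :
    ∀ yp : (Fin m → ℝ) × (Fin m → ℝ),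
      fderiv ℝ s yp (v yp) = 0 ∧
      (∑ j, (((∑ k, yp.1 k) + yp.1 j) * yp.2 j + (∑ k, (yp.1 k) ^ 2) * yp.1 j
          - (∑ k, yp.1 k) * (yp.1 j) ^ 2))
        = (∑ j, yp.1 j * yp.2 j) + (∑ k, yp.1 k) * (∑ j, yp.2 j) :=
  stmt_11_general m v hv s hs
end

section
/- Let m ≥ 2, n = m + 1, and q ∈ ℝ with q ≠ 0, and write 𝟙 = (1, …, 1) ∈ ℝ^m. The Fréchet derivative of the vector field v at the point q·(𝟙, 0) is the linear endomorphism L of ℝ^m × ℝ^m given by L(ŷ, p̂) = (p̂, n q·p̂ + q²·(Σ_k ŷ_k)·𝟙 − (n − 1)·q²·ŷ). Moreover, L is diagonalizable with eigenvalues 0, n q, (n − 1)q, and q, of multiplicities 1, 1, n − 2, and n − 2 respectively; for λ ∈ {0, n q} the eigenspace of λ is {(c·𝟙, λ·c·𝟙) : c ∈ ℝ}, and for λ ∈ {(n − 1)q, q} the eigenspace of λ is {(ŷ, λ·ŷ) : ŷ ∈ ℝ^m, Σ_k ŷ_k = 0}. -/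
/-!
At `q • (𝟙, 0)` the derivative of `v` is the companion operator `(ŷ, p̂) ↦ (p̂, α p̂ - B ŷ)` of the
second-order system `ŷ'' = α ŷ' - B ŷ`, with `α = n q` and `B = q² (m I - 𝟙 𝟙ᵀ)`, i.e. `q²` times
the Laplacian of the complete graph on `m` vertices. The eigenvectors of a companion operator are
the pairs `(y, μ y)` with `B y = (α μ - μ²) y`. Here `B` vanishes on constants and is `m q²` on
sum-zero vectors, and the roots of `μ² - n q μ` and `μ² - n q μ + m q²` are `{0, n q}` and
`{m q, q}`. Since these roots are distinct for `q ≠ 0`, `m ≥ 2`, every eigenspace `E` of `B`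
yields `E × E` inside the span of two eigenspaces of the companion operator, and `B` is
diagonalizable, so the derivative is too.
-/

open Module End

section Companion

variable {K V : Type*} [Field K] [AddCommGroup V] [Module K V]

/-- The first-order form of `y'' = α y' - B y`. -/
def companion (α : K) (B : End K V) : End K (V × V) :=
  (LinearMap.snd K V V).prod (α • LinearMap.snd K V V - B ∘ₗ LinearMap.fst K V V)

@[simp]
lemma companion_apply (α : K) (B : End K V) (u : V × V) :
    companion α B u = (u.2, α • u.2 - B u.1) := rfl

lemma mem_eigenspace_companion {α μ : K} {B : End K V} {u : V × V} :
    u ∈ eigenspace (companion α B) μ ↔ u.2 = μ • u.1 ∧ u.1 ∈ eigenspace B (α * μ - μ ^ 2) := by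
  simp only [mem_eigenspace_iff, companion_apply, Prod.ext_iff, Prod.smul_fst, Prod.smul_snd]
  constructor
  · rintro ⟨h₁, h₂⟩
    refine ⟨h₁, ?_⟩
    rw [h₁] at h₂
    rw [pow_two, sub_smul, mul_smul, mul_smul, ← h₂, sub_sub_cancel]
  · rintro ⟨h₁, h₂⟩
    refine ⟨h₁, ?_⟩
    rw [h₁, h₂]
    module

lemma eigenspace_smul_mul {c : K} (hc : c ≠ 0) (f : End K V) (μ : K) :
    eigenspace (c • f) (c * μ) = eigenspace f μ := by
  ext x
  simp only [mem_eigenspace_iff, LinearMap.smul_apply, mul_smul, smul_right_inj hc]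

lemma finrank_eigenspace_companion (α μ : K) (B : End K V) :
    finrank K (eigenspace (companion α B) μ) = finrank K (eigenspace B (α * μ - μ ^ 2)) := by
  set graph : V →ₗ[K] V × V := LinearMap.id.prod (μ • LinearMap.id)
  have hgraph : Function.Injective graph := fun x y h => congrArg Prod.fst h
  have : eigenspace (companion α B) μ = (eigenspace B (α * μ - μ ^ 2)).map graph := by
    ext u
    simp only [mem_eigenspace_companion, Submodule.mem_map]
    constructor
    · rintro ⟨h₁, h₂⟩
      exact ⟨u.1, h₂, Prod.ext rfl h₁.symm⟩
    · rintro ⟨y, hy, rfl⟩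
      exact ⟨rfl, hy⟩
  rw [this, (Submodule.equivMapOfInjective graph hgraph _).finrank_eq]

lemma prod_eigenspace_le_sup_eigenspace_companion {α μ₁ μ₂ b : K} {B : End K V}
    (hμ : μ₁ ≠ μ₂) (hα : μ₁ + μ₂ = α) (hb : μ₁ * μ₂ = b) :
    (eigenspace B b).prod (eigenspace B b) ≤
      eigenspace (companion α B) μ₁ ⊔ eigenspace (companion α B) μ₂ := by
  rintro ⟨y, p⟩ ⟨hy, hp⟩
  have hd : μ₁ - μ₂ ≠ 0 := sub_ne_zero.2 hμ
  have hroot : ∀ {μ}, (μ = μ₁ ∨ μ = μ₂) → α * μ - μ ^ 2 = b := by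
    rintro μ (rfl | rfl) <;> rw [← hα, ← hb] <;> ring
  refine Submodule.mem_sup.2 ⟨((μ₁ - μ₂)⁻¹ • (p - μ₂ • y), μ₁ • (μ₁ - μ₂)⁻¹ • (p - μ₂ • y)), ?_,
    ((μ₁ - μ₂)⁻¹ • (μ₁ • y - p), μ₂ • (μ₁ - μ₂)⁻¹ • (μ₁ • y - p)), ?_, ?_⟩
  · rw [mem_eigenspace_companion, hroot (Or.inl rfl)]
    exact ⟨rfl, Submodule.smul_mem _ _ (Submodule.sub_mem _ hp (Submodule.smul_mem _ _ hy))⟩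
  · rw [mem_eigenspace_companion, hroot (Or.inr rfl)]
    exact ⟨rfl, Submodule.smul_mem _ _ (Submodule.sub_mem _ (Submodule.smul_mem _ _ hy) hp)⟩
  · ext <;> simp only [Prod.fst_add, Prod.snd_add] <;> match_scalars <;> field_simp <;> ring

end Companion

section CompleteLaplacian

variable {m : ℕ}

noncomputable def coordSum (m : ℕ) : Dual ℝ (Fin m → ℝ) := ∑ k, LinearMap.proj k

@[simp]
lemma coordSum_apply (y : Fin m → ℝ) : coordSum m y = ∑ k, y k := by
  simp [coordSum]

noncomputable def completeLaplacian (m : ℕ) : End ℝ (Fin m → ℝ) :=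
  (m : ℝ) • LinearMap.id - (coordSum m).smulRight 1

@[simp]
lemma completeLaplacian_apply (y : Fin m → ℝ) :
    completeLaplacian m y = (m : ℝ) • y - (∑ k, y k) • 1 := by
  simp [completeLaplacian]

lemma eigenspace_completeLaplacian_zero (hm : m ≠ 0) :
    eigenspace (completeLaplacian m) 0 = ℝ ∙ 1 := by
  ext y
  rw [mem_eigenspace_iff, zero_smul, completeLaplacian_apply, sub_eq_zero,
    Submodule.mem_span_singleton]
  constructor
  · intro h
    refine ⟨(∑ k, y k) / m, funext fun j => ?_⟩
    have hj := congrFun h j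
    simp only [Pi.smul_apply, smul_eq_mul, Pi.one_apply, mul_one] at hj ⊢
    field_simp
    linarith
  · rintro ⟨c, rfl⟩
    ext j
    simp [Finset.sum_const, mul_comm]

lemma eigenspace_completeLaplacian_self (hm : m ≠ 0) :
    eigenspace (completeLaplacian m) m = LinearMap.ker (coordSum m) := by
  have : NeZero m := ⟨hm⟩
  ext y
  simp

lemma finrank_ker_coordSum (hm : m ≠ 0) : finrank ℝ (LinearMap.ker (coordSum m)) = m - 1 := by
  have hsum : coordSum m ≠ 0 := fun h => hm (by simpa using LinearMap.congr_fun h 1)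
  have := Module.Dual.finrank_ker_add_one_of_ne_zero hsum
  simp only [finrank_fin_fun] at this
  omega

lemma eigenspace_completeLaplacian_zero_sup_self (hm : m ≠ 0) :
    eigenspace (completeLaplacian m) 0 ⊔ eigenspace (completeLaplacian m) m = ⊤ := by
  rw [eigenspace_completeLaplacian_zero hm, eigenspace_completeLaplacian_self hm]
  exact LinearMap.span_singleton_sup_ker_eq_top _ (by simpa using hm)

end CompleteLaplacian

section Linearization

variable {m : ℕ} {q μ : ℝ}

noncomputable def linearization (m : ℕ) (q : ℝ) : End ℝ ((Fin m → ℝ) × (Fin m → ℝ)) :=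
  companion ((m + 1) * q) (q ^ 2 • completeLaplacian m)

lemma linearization_apply (u : (Fin m → ℝ) × (Fin m → ℝ)) :
    linearization m q u =
      (u.2, fun j => (m + 1) * q * u.2 j + q ^ 2 * ∑ k, u.1 k - m * q ^ 2 * u.1 j) := by
  refine Prod.ext rfl (funext fun j => ?_)
  simp [linearization]
  ring

lemma mem_eigenspace_linearization_iff {ν : ℝ} (hq : q ≠ 0) (hμ : (m + 1) * q * μ - μ ^ 2 = q ^ 2 * ν)
    {u : (Fin m → ℝ) × (Fin m → ℝ)} :
    u ∈ eigenspace (linearization m q) μ ↔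
      u.2 = μ • u.1 ∧ u.1 ∈ eigenspace (completeLaplacian m) ν := by
  rw [linearization, mem_eigenspace_companion, hμ, eigenspace_smul_mul (pow_ne_zero 2 hq)]

lemma finrank_eigenspace_linearization {ν : ℝ} (hq : q ≠ 0)
    (hμ : (m + 1) * q * μ - μ ^ 2 = q ^ 2 * ν) :
    finrank ℝ (eigenspace (linearization m q) μ) = finrank ℝ (eigenspace (completeLaplacian m) ν) := by
  rw [linearization, finrank_eigenspace_companion, hμ, eigenspace_smul_mul (pow_ne_zero 2 hq)]

lemma mem_eigenspace_linearization_of_const (hm : m ≠ 0) (hq : q ≠ 0)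
    (hμ : μ = 0 ∨ μ = (m + 1) * q) {u : (Fin m → ℝ) × (Fin m → ℝ)} :
    u ∈ eigenspace (linearization m q) μ ↔ ∃ c : ℝ, u = (fun _ => c, fun _ => μ * c) := by
  have hroot : (m + 1) * q * μ - μ ^ 2 = q ^ 2 * 0 := by rcases hμ with rfl | rfl <;> ring
  rw [mem_eigenspace_linearization_iff hq hroot, eigenspace_completeLaplacian_zero hm,
    Submodule.mem_span_singleton]
  constructor
  · rintro ⟨h₂, c, h₁⟩
    refine ⟨c, Prod.ext (h₁.symm.trans ?_) (h₂.trans ?_)⟩ <;> ext <;> simp [← h₁]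
  · rintro ⟨c, rfl⟩
    exact ⟨by ext; simp, c, by ext; simp⟩

lemma finrank_eigenspace_linearization_of_const (hm : m ≠ 0) (hq : q ≠ 0)
    (hμ : μ = 0 ∨ μ = (m + 1) * q) : finrank ℝ (eigenspace (linearization m q) μ) = 1 := by
  have hroot : (m + 1) * q * μ - μ ^ 2 = q ^ 2 * 0 := by rcases hμ with rfl | rfl <;> ring
  rw [finrank_eigenspace_linearization hq hroot, eigenspace_completeLaplacian_zero hm]
  have : NeZero m := ⟨hm⟩
  exact finrank_span_singleton one_ne_zero

lemma mem_eigenspace_linearization_of_sum_eq_zero (hm : m ≠ 0) (hq : q ≠ 0)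
    (hμ : μ = m * q ∨ μ = q) {u : (Fin m → ℝ) × (Fin m → ℝ)} :
    u ∈ eigenspace (linearization m q) μ ↔ ∑ k, u.1 k = 0 ∧ u.2 = μ • u.1 := by
  have hroot : (m + 1) * q * μ - μ ^ 2 = q ^ 2 * m := by rcases hμ with rfl | rfl <;> ring
  rw [mem_eigenspace_linearization_iff hq hroot, eigenspace_completeLaplacian_self hm,
    LinearMap.mem_ker, coordSum_apply, and_comm]

lemma finrank_eigenspace_linearization_of_sum_eq_zero (hm : m ≠ 0) (hq : q ≠ 0)
    (hμ : μ = m * q ∨ μ = q) : finrank ℝ (eigenspace (linearization m q) μ) = m - 1 := by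
  have hroot : (m + 1) * q * μ - μ ^ 2 = q ^ 2 * m := by rcases hμ with rfl | rfl <;> ring
  rw [finrank_eigenspace_linearization hq hroot, eigenspace_completeLaplacian_self hm,
    finrank_ker_coordSum hm]

lemma iSup_eigenspace_linearization (hm : 2 ≤ m) (hq : q ≠ 0) :
    ⨆ μ ∈ ({0, (m + 1) * q, m * q, q} : Set ℝ), eigenspace (linearization m q) μ = ⊤ := by
  have hq2 : q ^ 2 ≠ 0 := pow_ne_zero 2 hq
  have hm' : (m : ℝ) ≠ 1 := by norm_cast; omega
  rw [iSup_insert, iSup_insert, iSup_insert, iSup_singleton, ← sup_assoc, eq_top_iff,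
    ← Submodule.prod_top, ← eigenspace_completeLaplacian_zero_sup_self (by omega),
    ← Submodule.prod_sup_prod, ← eigenspace_smul_mul hq2 _ 0, ← eigenspace_smul_mul hq2 _ m]
  exact sup_le_sup
    (prod_eigenspace_le_sup_eigenspace_companion (mul_ne_zero (by positivity) hq).symm
      (by ring) (by ring))
    (prod_eigenspace_le_sup_eigenspace_companion (fun h => hm' (by simpa [hq] using h))
      (by ring) (by ring))

end Linearization

def vectorField (m : ℕ) (yp : (Fin m → ℝ) × (Fin m → ℝ)) : (Fin m → ℝ) × (Fin m → ℝ) :=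
  (yp.2, fun j => ((∑ k, yp.1 k) + yp.1 j) * yp.2 j + (∑ k, yp.1 k ^ 2) * yp.1 j
    - (∑ k, yp.1 k) * yp.1 j ^ 2)

lemma hasFDerivAt_vectorField (m : ℕ) (q : ℝ) :
    HasFDerivAt (vectorField m) (LinearMap.toContinuousLinearMap (linearization m q))
      ((fun _ => q), (fun _ => 0)) := by
  set z : (Fin m → ℝ) × (Fin m → ℝ) := ((fun _ => q), (fun _ => 0))
  have hy (j : Fin m) : HasFDerivAt (fun u : (Fin m → ℝ) × (Fin m → ℝ) => u.1 j)
      ((ContinuousLinearMap.proj j).comp (ContinuousLinearMap.fst ℝ _ _)) z :=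
    (hasFDerivAt_apply (𝕜 := ℝ) j z.1).comp z (hasFDerivAt_fst (p := z))
  have hp (j : Fin m) : HasFDerivAt (fun u : (Fin m → ℝ) × (Fin m → ℝ) => u.2 j)
      ((ContinuousLinearMap.proj j).comp (ContinuousLinearMap.snd ℝ _ _)) z :=
    (hasFDerivAt_apply (𝕜 := ℝ) j z.2).comp z (hasFDerivAt_snd (p := z))
  have hS := HasFDerivAt.fun_sum (u := Finset.univ) fun k _ => hy k
  have hQ := HasFDerivAt.fun_sum (u := Finset.univ) fun k _ => (hy k).pow 2
  refine (hasFDerivAt_snd.prodMk (hasFDerivAt_pi.2 fun j =>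
    (((hS.add (hy j)).mul (hp j)).add (hQ.mul (hy j))).sub (hS.mul ((hy j).pow 2)))).congr_fderiv ?_
  refine ContinuousLinearMap.ext fun u => Prod.ext rfl (funext fun j => ?_)
  simp [linearization_apply, z, ← Finset.mul_sum]
  ring

/-- At the zero `q·(𝟙, 0)` (with `q ≠ 0`, `n = m + 1 ≥ 3`) of the
vector field `v` of the first-order system, the Fréchet derivative of `v` is
`L(ŷ, p̂) = (p̂, n q·p̂ + q²·(Σ ŷₖ)·𝟙 − (n−1)·q²·ŷ)`; it is diagonalizable with
eigenvalues `0, nq, (n−1)q, q` of multiplicities `1, 1, n−2, n−2`, with the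
stated eigenspaces. -/
theorem stmt_12 (m n : ℕ) (hm : 2 ≤ m) (hn : n = m + 1) (q : ℝ) (hq : q ≠ 0)
    (v : (Fin m → ℝ) × (Fin m → ℝ) → (Fin m → ℝ) × (Fin m → ℝ))
    (hv : ∀ yp : (Fin m → ℝ) × (Fin m → ℝ), v yp = (yp.2, fun j =>
      ((∑ k, yp.1 k) + yp.1 j) * yp.2 j + (∑ k, (yp.1 k) ^ 2) * yp.1 j
        - (∑ k, yp.1 k) * (yp.1 j) ^ 2))
    (z : (Fin m → ℝ) × (Fin m → ℝ))
    (hz : z = ((fun _ => q), (fun _ => 0))) :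
    (∀ u : (Fin m → ℝ) × (Fin m → ℝ),
      fderiv ℝ v z u = (u.2, fun j =>
        (n : ℝ) * q * u.2 j + q ^ 2 * (∑ k, u.1 k) - ((n : ℝ) - 1) * q ^ 2 * u.1 j)) ∧
    (⨆ μ ∈ ({0, (n : ℝ) * q, ((n : ℝ) - 1) * q, q} : Set ℝ),
        Module.End.eigenspace (fderiv ℝ v z).toLinearMap μ) = ⊤ ∧
    Module.finrank ℝ (Module.End.eigenspace (fderiv ℝ v z).toLinearMap 0) = 1 ∧
    Module.finrank ℝ (Module.End.eigenspace (fderiv ℝ v z).toLinearMap ((n : ℝ) * q)) = 1 ∧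
    Module.finrank ℝ
      (Module.End.eigenspace (fderiv ℝ v z).toLinearMap (((n : ℝ) - 1) * q)) = n - 2 ∧
    Module.finrank ℝ (Module.End.eigenspace (fderiv ℝ v z).toLinearMap q) = n - 2 ∧
    (∀ μ : ℝ, μ = 0 ∨ μ = (n : ℝ) * q →
      ∀ u : (Fin m → ℝ) × (Fin m → ℝ),
        u ∈ Module.End.eigenspace (fderiv ℝ v z).toLinearMap μ ↔
          ∃ c : ℝ, u = ((fun _ => c), (fun _ => μ * c))) ∧
    (∀ μ : ℝ, μ = ((n : ℝ) - 1) * q ∨ μ = q →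
      ∀ u : (Fin m → ℝ) × (Fin m → ℝ),
        u ∈ Module.End.eigenspace (fderiv ℝ v z).toLinearMap μ ↔
          (∑ k, u.1 k) = 0 ∧ u.2 = μ • u.1) := by
  obtain rfl : v = vectorField m := funext hv
  subst hz hn
  have hm0 : m ≠ 0 := by omega
  rw [(hasFDerivAt_vectorField m q).fderiv, Nat.cast_add, Nat.cast_one, add_sub_cancel_right, show m + 1 - 2 = m - 1 by omega]
  simp only [LinearMap.coe_toContinuousLinearMap, LinearMap.coe_toContinuousLinearMap']
  refine ⟨linearization_apply, iSup_eigenspace_linearization hm hq,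
    finrank_eigenspace_linearization_of_const hm0 hq (.inl rfl),
    finrank_eigenspace_linearization_of_const hm0 hq (.inr rfl),
    finrank_eigenspace_linearization_of_sum_eq_zero hm0 hq (.inl rfl),
    finrank_eigenspace_linearization_of_sum_eq_zero hm0 hq (.inr rfl),
    fun μ hμ u => mem_eigenspace_linearization_of_const hm0 hq hμ,
    fun μ hμ u => mem_eigenspace_linearization_of_sum_eq_zero hm0 hq hμ⟩
end

section
/- Let y : ℝ → ℝ be continuous and let g : ℝ → (0, ∞) be differentiable with g'(t) = −2·y(t)·g(t) for all t ∈ ℝ. Suppose there are δ > 0 and T > 0 such that y(t) ≤ −δ for all t ≥ T and y(t) ≥ δ for all t ≤ −T. Then g(t) → ∞ as t → ∞ and as t → −∞, and there is a constant a > 0 with g(t) ≥ a for all t ∈ ℝ. -/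
/-! Along `t ≥ T` the logarithm `log g` has derivative `-2 y ≥ 2δ`, so it grows at least linearly,
and symmetrically as `t → -∞`; hence `g → ∞` at both ends. A continuous function tending to `+∞`
at both ends attains a global minimum, which is positive since `g` is. -/

open Filter

theorem tendsto_atTop_of_hasDerivAt_ge {f f' : ℝ → ℝ} {T c : ℝ} (hc : 0 < c)
    (hf : ∀ t, T ≤ t → HasDerivAt f (f' t) t) (hf' : ∀ t, T ≤ t → c ≤ f' t) :
    Tendsto f atTop atTop := by
  have hlin : ∀ t, T ≤ t → c * (t - T) ≤ f t - f T := by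
    refine fun t ht => (convex_Ici T).mul_sub_le_image_sub_of_le_deriv
      (fun s hs => (hf s hs).continuousAt.continuousWithinAt)
      (fun s hs => (hf s (interior_subset hs)).differentiableAt.differentiableWithinAt)
      (fun s hs => ?_) T Set.self_mem_Ici t ht ht
    rw [(hf s (interior_subset hs)).deriv]
    exact hf' s (interior_subset hs)
  have hbound : Tendsto (fun t => f T + c * (t - T)) atTop atTop :=
    tendsto_atTop_add_const_left _ _ <|
      (tendsto_atTop_add_const_right _ _ tendsto_id).const_mul_atTop hc
  refine tendsto_atTop_mono' _ ?_ hbound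
  filter_upwards [eventually_ge_atTop T] with t ht
  linarith [hlin t ht]

theorem tendsto_atBot_of_hasDerivAt_le {f f' : ℝ → ℝ} {T c : ℝ} (hc : 0 < c)
    (hf : ∀ t, t ≤ T → HasDerivAt f (f' t) t) (hf' : ∀ t, t ≤ T → f' t ≤ -c) :
    Tendsto f atBot atTop := by
  have hrefl : Tendsto (fun t => f (-t)) atTop atTop :=
    tendsto_atTop_of_hasDerivAt_ge (f' := fun t => -f' (-t)) (T := -T) hc
      (fun t ht => by
        simpa [Function.comp_def] using (hf (-t) (by linarith)).comp t (hasDerivAt_neg' t))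
      (fun t ht => by linarith [hf' (-t) (by linarith)])
  simpa [Function.comp_def] using hrefl.comp tendsto_neg_atBot_atTop

theorem Continuous.exists_pos_forall_le {g : ℝ → ℝ} (hg : Continuous g) (hpos : ∀ t, 0 < g t)
    (htop : Tendsto g atTop atTop) (hbot : Tendsto g atBot atTop) :
    ∃ a, 0 < a ∧ ∀ t, a ≤ g t := by
  obtain ⟨t₀, ht₀⟩ := hg.exists_forall_le <| by
    rw [cocompact_eq_atBot_atTop]
    exact hbot.sup htop
  exact ⟨g t₀, hpos t₀, ht₀⟩

theorem stmt_17_general (y : ℝ → ℝ)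
    (g : ℝ → ℝ) (hgpos : ∀ t : ℝ, 0 < g t)
    (hg : ∀ t : ℝ, HasDerivAt g (-2 * y t * g t) t)
    (δ T : ℝ) (hδ : 0 < δ)
    (h₁ : ∀ t : ℝ, T ≤ t → y t ≤ -δ)
    (h₂ : ∀ t : ℝ, t ≤ -T → δ ≤ y t) :
    Filter.Tendsto g Filter.atTop Filter.atTop ∧
    Filter.Tendsto g Filter.atBot Filter.atTop ∧
    ∃ a : ℝ, 0 < a ∧ ∀ t : ℝ, a ≤ g t := by
  have hlog : ∀ t, HasDerivAt (fun s => Real.log (g s)) (-2 * y t) t := fun t => by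
    convert (hg t).log (hgpos t).ne' using 1
    field_simp [(hgpos t).ne']
  have hexp_log : (fun t => Real.exp (Real.log (g t))) = g := funext fun t => Real.exp_log (hgpos t)
  have h2δ : 0 < 2 * δ := by positivity
  have htop : Tendsto g atTop atTop := hexp_log ▸ Real.tendsto_exp_atTop.comp
    (tendsto_atTop_of_hasDerivAt_ge h2δ (fun t _ => hlog t) fun t ht => by linarith [h₁ t ht])
  have hbot : Tendsto g atBot atTop := hexp_log ▸ Real.tendsto_exp_atTop.comp
    (tendsto_atBot_of_hasDerivAt_le h2δ (fun t _ => hlog t) fun t ht => by linarith [h₂ t ht])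
  have hcont : Continuous g := continuous_iff_continuousAt.mpr fun t => (hg t).continuousAt
  exact ⟨htop, hbot, hcont.exists_pos_forall_le hgpos htop hbot⟩

/-- If `g > 0` satisfies `g' = −2·y·g` with `y` continuous, and
`y ≤ −δ` for `t ≥ T` while `y ≥ δ` for `t ≤ −T` (some `δ, T > 0`), then
`g → ∞` at both ends and `g` is bounded below by a positive constant. -/
theorem stmt_17 (y : ℝ → ℝ) (hy : Continuous y)
    (g : ℝ → ℝ) (hgpos : ∀ t : ℝ, 0 < g t)
    (hg : ∀ t : ℝ, HasDerivAt g (-2 * y t * g t) t)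
    (δ T : ℝ) (hδ : 0 < δ) (hT : 0 < T)
    (h₁ : ∀ t : ℝ, T ≤ t → y t ≤ -δ)
    (h₂ : ∀ t : ℝ, t ≤ -T → δ ≤ y t) :
    Filter.Tendsto g Filter.atTop Filter.atTop ∧
    Filter.Tendsto g Filter.atBot Filter.atTop ∧
    ∃ a : ℝ, 0 < a ∧ ∀ t : ℝ, a ≤ g t :=
  stmt_17_general y g hgpos hg δ T hδ h₁ h₂
end
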